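/- arXiv:cs/0603007 — 9 statements merged into one kernel-verified Lean document; each statement's English description precedes it below -/
import Mathlib

section
/- Let H be an r×n binary matrix. For a subset T of row indices, let z_T be the number of columns of H that are zero in all rows indexed by T, and for p ≥ 0 let Y(T,p) be the number of p-element column-subsets Y such that the submatrix of H on rows T and columns Y has every row of weight exactly one and every column nonzero. Then the number S_l of stopping sets of H of size l (subsets S of columns such that no row of H restricted to S has weight exactly one) equals ∑_{T ⊆ {1,...,r}} (-1)^{|T|} ∑_{p=0}^{l} Y(T,p) · C(z_T, l-p). -/
open Finset

/-- A subset `S` of column indices is a stopping set of `H` if no row of `H`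
restricted to `S` has weight exactly one. -/
def IsStoppingSet {r n : ℕ} (H : Matrix (Fin r) (Fin n) (ZMod 2)) (S : Finset (Fin n)) : Prop :=
  ∀ i, (S.filter fun j => H i j = 1).card ≠ 1

/-- The number of stopping sets of `H` of size `l`. -/
noncomputable def numStoppingSets {r n : ℕ} (H : Matrix (Fin r) (Fin n) (ZMod 2)) (l : ℕ) : ℕ :=
  Nat.card {S : Finset (Fin n) // IsStoppingSet H S ∧ S.card = l}

/-- `z T`: the number of columns of `H` vanishing on all rows indexed by `T`. -/
noncomputable def zCount {r n : ℕ} (H : Matrix (Fin r) (Fin n) (ZMod 2))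
    (T : Finset (Fin r)) : ℕ :=
  Nat.card {j : Fin n // ∀ i ∈ T, H i j = 0}

/-- `Y T p`: the number of `p`-element column subsets `Y` such that the submatrix of `H`
on rows `T` and columns `Y` has every row of weight exactly one and every column nonzero. -/
noncomputable def yCount {r n : ℕ} (H : Matrix (Fin r) (Fin n) (ZMod 2))
    (T : Finset (Fin r)) (p : ℕ) : ℕ :=
  Nat.card {Y : Finset (Fin n) // Y.card = p ∧
    (∀ i ∈ T, (Y.filter fun j => H i j = 1).card = 1) ∧
    (∀ j ∈ Y, ∃ i ∈ T, H i j = 1)}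

/-!
Inclusion–exclusion over the set `T` of rows required to have weight exactly one on `S`:
the indicator of "no row has weight one" is `∑_T (-1)^|T| [every row of T has weight one]`.
For fixed `T`, a column set `S` splits into its columns with a one in some row of `T`, which
alone decide the weight-one condition and form a set counted by `Y(T, p)`, and its columns
vanishing on `T`, chosen freely among the `z_T` such columns.
-/

section SplitCount

variable {α : Type*} [DecidableEq α] {Q : α → Prop} [DecidablePred Q]

theorem filter_union_eq_left_of_forall {Y Z : Finset α} (hY : ∀ j ∈ Y, Q j)
    (hZ : ∀ j ∈ Z, ¬Q j) : (Y ∪ Z).filter Q = Y := by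
  rw [filter_union, filter_true_of_mem hY, filter_false_of_mem hZ, union_empty]

theorem filter_union_eq_right_of_forall {Y Z : Finset α} (hY : ∀ j ∈ Y, Q j)
    (hZ : ∀ j ∈ Z, ¬Q j) : (Y ∪ Z).filter (¬Q ·) = Z := by
  rw [filter_union, filter_false_of_mem (by simpa using hY), filter_true_of_mem hZ, empty_union]

variable [Fintype α] (Q)

theorem card_card_eq_and_filter_eq_sum (P : Finset α → Prop) [DecidablePred P] (l : ℕ) :
    #{S : Finset α | S.card = l ∧ P (S.filter Q)} =
      ∑ p ∈ range (l + 1),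
        #{Y : Finset α | Y.card = p ∧ P Y ∧ ∀ j ∈ Y, Q j} * (#{j | ¬Q j}).choose (l - p) := by
  rw [card_eq_sum_card_fiberwise (f := fun S => #(S.filter Q)) (t := range (l + 1))]
  · refine sum_congr rfl fun p hp => ?_
    have hpl : p ≤ l := Nat.lt_succ_iff.mp (mem_range.mp hp)
    rw [← card_powersetCard, ← card_product]
    refine card_nbij' (fun S => (S.filter Q, S.filter (¬Q ·))) (fun YZ => YZ.1 ∪ YZ.2)
      ?_ ?_ ?_ ?_
    · intro S hS
      simp only [mem_coe, mem_filter, mem_univ, true_and, mem_product, mem_powersetCard] at hS ⊢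
      obtain ⟨⟨hS, hP⟩, hp⟩ := hS
      refine ⟨⟨hp, hP, fun j hj => hj.2⟩, fun j hj => ?_, ?_⟩
      · simpa using (mem_filter.mp hj).2
      · rw [filter_not, card_sdiff_of_subset (filter_subset _ _), hS, hp]
    · rintro ⟨Y, Z⟩ hYZ
      simp only [mem_coe, mem_filter, mem_univ, true_and, mem_product, mem_powersetCard] at hYZ ⊢
      obtain ⟨⟨hY, hP, hYQ⟩, hZ, hZc⟩ := hYZ
      have hZQ : ∀ j ∈ Z, ¬Q j := fun j hj => by simpa using hZ hj
      have hdisj : Disjoint Y Z :=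
        disjoint_left.mpr fun j hjY hjZ => hZQ j hjZ (hYQ j hjY)
      rw [filter_union_eq_left_of_forall hYQ hZQ, card_union_of_disjoint hdisj]
      exact ⟨⟨by omega, hP⟩, hY⟩
    · intro S _
      exact filter_union_filter_not_eq Q S
    · rintro ⟨Y, Z⟩ hYZ
      simp only [mem_coe, mem_filter, mem_univ, true_and, mem_product, mem_powersetCard] at hYZ
      have hZQ : ∀ j ∈ Z, ¬Q j := fun j hj => by simpa using hYZ.2.1 hj
      simp only [filter_union_eq_left_of_forall hYZ.1.2.2 hZQ,
        filter_union_eq_right_of_forall hYZ.1.2.2 hZQ]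
  · intro S hS
    simp only [coe_filter, mem_univ, true_and] at hS
    simpa [Nat.lt_succ_iff, ← hS.1] using card_filter_le S Q

end SplitCount

theorem sum_ite_forall_mem_neg_one_pow_card {ι : Type*} [Fintype ι] [DecidableEq ι]
    (P : ι → Prop) [DecidablePred P] :
    ∑ T : Finset ι, (if ∀ i ∈ T, P i then (-1 : ℤ) ^ #T else 0) = if ∀ i, ¬P i then 1 else 0 := by
  have hpowerset : ({T : Finset ι | ∀ i ∈ T, P i} : Finset _) = (univ.filter P).powerset := by
    ext T
    simp [subset_iff]
  rw [← sum_filter, hpowerset, sum_powerset_neg_one_pow_card]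
  simp [filter_eq_empty_iff]

section StoppingSets

variable {r n : ℕ} (H : Matrix (Fin r) (Fin n) (ZMod 2))

theorem not_exists_eq_one_iff_forall_eq_zero (T : Finset (Fin r)) (j : Fin n) :
    (¬∃ i ∈ T, H i j = 1) ↔ ∀ i ∈ T, H i j = 0 := by
  push Not
  exact forall₂_congr fun i _ => by generalize H i j = a; decide +revert

theorem card_rowWeight_eq_one_eq_sum (T : Finset (Fin r)) (l : ℕ) :
    #{S : Finset (Fin n) | S.card = l ∧ ∀ i ∈ T, #{j ∈ S | H i j = 1} = 1} =
      ∑ p ∈ range (l + 1), yCount H T p * (zCount H T).choose (l - p) := by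
  have hrow (S : Finset (Fin n)) :
      (∀ i ∈ T, #{j ∈ S | H i j = 1} = 1) ↔
        ∀ i ∈ T, #{j ∈ S.filter (fun j => ∃ i ∈ T, H i j = 1) | H i j = 1} = 1 := by
    refine forall₂_congr fun i hi => ?_
    have hcovered : {j ∈ S | H i j = 1} = {j ∈ S | (∃ i ∈ T, H i j = 1) ∧ H i j = 1} :=
      filter_congr fun j _ => ⟨fun h => ⟨⟨i, hi, h⟩, h⟩, fun h => h.2⟩
    rw [filter_filter, hcovered]
  have hzero : #{j | ¬∃ i ∈ T, H i j = 1} = zCount H T := by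
    simp only [not_exists_eq_one_iff_forall_eq_zero, zCount, Nat.card_eq_fintype_card,
      Fintype.card_subtype]
  rw [filter_congr fun S _ => and_congr_right fun _ => hrow S,
    card_card_eq_and_filter_eq_sum (fun j => ∃ i ∈ T, H i j = 1)
      (fun Y => ∀ i ∈ T, #{j ∈ Y | H i j = 1} = 1), hzero]
  simp only [yCount, Nat.card_eq_fintype_card, Fintype.card_subtype]
  congr!

instance (S : Finset (Fin n)) : Decidable (IsStoppingSet H S) :=
  Fintype.decidableForallFintype

theorem numStoppingSets_eq_card (l : ℕ) :
    numStoppingSets H l = #{S : Finset (Fin n) | S.card = l ∧ IsStoppingSet H S} := by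
  rw [numStoppingSets, Nat.card_eq_fintype_card, Fintype.card_subtype]
  exact congrArg card (filter_congr fun S _ => and_comm)

end StoppingSets

/-- Inclusion–exclusion formula for the number of stopping sets of size `l`. -/
theorem stmt3 {r n : ℕ} (H : Matrix (Fin r) (Fin n) (ZMod 2)) (l : ℕ) :
    (numStoppingSets H l : ℤ) =
      ∑ T : Finset (Fin r), (-1 : ℤ) ^ T.card *
        ∑ p ∈ Finset.range (l + 1),
          (yCount H T p : ℤ) * ((zCount H T).choose (l - p)) := by
  have hindicator (S : Finset (Fin n)) : (if IsStoppingSet H S then (1 : ℤ) else 0) =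
      ∑ T : Finset (Fin r), if ∀ i ∈ T, #{j ∈ S | H i j = 1} = 1 then (-1 : ℤ) ^ #T else 0 := by
    convert (sum_ite_forall_mem_neg_one_pow_card fun i => #{j ∈ S | H i j = 1} = 1).symm
    rfl
  calc (numStoppingSets H l : ℤ)
      = ∑ S : Finset (Fin n) with S.card = l, if IsStoppingSet H S then (1 : ℤ) else 0 := by
        rw [numStoppingSets_eq_card, sum_boole, filter_filter]
    _ = ∑ T : Finset (Fin r), (-1 : ℤ) ^ #T *
          #{S : Finset (Fin n) | S.card = l ∧ ∀ i ∈ T, #{j ∈ S | H i j = 1} = 1} := by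
        simp_rw [hindicator]
        rw [sum_comm]
        refine sum_congr rfl fun T _ => ?_
        rw [sum_ite, sum_const_zero, add_zero, sum_const, filter_filter, nsmul_eq_mul, mul_comm]
    _ = _ := by
        simp_rw [card_rowWeight_eq_one_eq_sum]
        push_cast
        rfl
end

section
/- Let H be the m×(2^m−1) binary matrix whose columns are all distinct nonzero vectors of length m. For any nonempty subset T of row indices with |T| = t and any p ≥ 0, the number of p-element column-subsets Y such that the submatrix on rows T and columns Y has every row of weight exactly one and every column nonzero equals S(t,p) · 2^{(m−t)p}, where S(t,p) is the Stirling number of the second kind. -/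
open Finset

/-- Stirling numbers of the second kind: the number of partitions of a t-set into p
nonempty parts. -/
noncomputable def stirlingSnd (t p : ℕ) : ℕ :=
  Nat.card {P : Finpartition (Finset.univ : Finset (Fin t)) // P.parts.card = p}

/-!
The columns of `H` are exactly the nonzero vectors of `𝔽₂^m`, and a column is determined by its
support on the rows of `T` together with its `m - t` entries off `T`, which are arbitrary once
that support is nonempty. The conditions on `Y` say precisely that the supports on `T` of the
columns in `Y` are pairwise distinct and form a partition of `T`. So an admissible `Y` amounts to
a partition of `T` into `p` blocks together with, for each block, one of the `2^(m-t)` columns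
having that block as support.
-/

section Stirling

variable {α β : Type*} [Fintype α] [DecidableEq α] [Fintype β] [DecidableEq β]

def Equiv.finsetCongrOrderIso (e : α ≃ β) : Finset α ≃o Finset β where
  toEquiv := e.finsetCongr
  map_rel_iff' := by simp

def Finpartition.univCongr (e : α ≃ β) :
    Finpartition (univ : Finset α) ≃ Finpartition (univ : Finset β) where
  toFun P := (P.map e.finsetCongrOrderIso).copy (map_univ_equiv e)
  invFun P := (P.map e.symm.finsetCongrOrderIso).copy (map_univ_equiv e.symm)
  left_inv P := by ext; simp [Finpartition.copy, Equiv.finsetCongrOrderIso, Finset.map_map]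
  right_inv P := by ext; simp [Finpartition.copy, Equiv.finsetCongrOrderIso, Finset.map_map]

@[simp]
lemma Finpartition.card_parts_univCongr (e : α ≃ β) (P : Finpartition (univ : Finset α)) :
    #(Finpartition.univCongr e P).parts = #P.parts := by
  simp [Finpartition.univCongr, Finpartition.copy]

lemma card_finpartition_univ_eq_stirlingSnd (p : ℕ) :
    Nat.card {P : Finpartition (univ : Finset α) // #P.parts = p} =
      stirlingSnd (Fintype.card α) p :=
  Nat.card_congr <| (Finpartition.univCongr (Fintype.equivFin α)).subtypeEquiv fun P => by simp

end Stirling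

section ExactCover

variable {κ τ : Type*} [DecidableEq τ] (β : κ → Finset τ)

def IsExactCover (Y : Finset κ) : Prop :=
  (∀ i, #{j ∈ Y | i ∈ β j} = 1) ∧ ∀ j ∈ Y, (β j).Nonempty

namespace IsExactCover

variable {β} {Y : Finset κ} (hY : IsExactCover β Y)
include hY

lemma eq_of_mem {i : τ} {j j' : κ} (hj : j ∈ Y) (hj' : j' ∈ Y) (hi : i ∈ β j)
    (hi' : i ∈ β j') : j = j' :=
  card_le_one.1 (hY.1 i).le j (mem_filter.2 ⟨hj, hi⟩) j' (mem_filter.2 ⟨hj', hi'⟩)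

lemma exists_mem (i : τ) : ∃ j ∈ Y, i ∈ β j := by
  obtain ⟨j, hj⟩ := card_pos.1 (hY.1 i).ge
  exact ⟨j, (mem_filter.1 hj).1, (mem_filter.1 hj).2⟩

lemma injOn : Set.InjOn β Y := fun j hj j' hj' h => by
  obtain ⟨i, hi⟩ := hY.2 j hj
  exact hY.eq_of_mem hj hj' hi (h ▸ hi)

variable [Fintype τ]

def toFinpartition : Finpartition (univ : Finset τ) :=
  Finpartition.ofExistsUnique (Y.image β) (fun _ _ => subset_univ _)
    (fun i _ => by
      obtain ⟨j, hj, hi⟩ := hY.exists_mem i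
      refine ⟨β j, ⟨mem_image_of_mem β hj, hi⟩, ?_⟩
      rintro _ ⟨hb, hib⟩
      obtain ⟨j', hj', rfl⟩ := mem_image.1 hb
      rw [hY.eq_of_mem hj' hj hib hi])
    (fun h => by
      obtain ⟨j, hj, hβ⟩ := mem_image.1 h
      exact not_nonempty_empty (hβ ▸ hY.2 j hj))

lemma card_parts_toFinpartition : #hY.toFinpartition.parts = #Y :=
  card_image_of_injOn hY.injOn

end IsExactCover

namespace Finpartition

variable {β} [Fintype τ] [DecidableEq κ] {P : Finpartition (univ : Finset τ)}

def choiceSet (s : ∀ b : P.parts, {j // β j = b}) : Finset κ :=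
  P.parts.attach.image fun b => s b

variable (s : ∀ b : P.parts, {j // β j = b})

lemma mem_choiceSet {j : κ} : j ∈ choiceSet s ↔ ∃ b, (s b : κ) = j := by
  simp [choiceSet]

lemma card_choiceSet : #(choiceSet s) = #P.parts := by
  rw [choiceSet, card_image_of_injective, card_attach]
  intro b b' h
  exact Subtype.ext ((s b).2.symm.trans ((congrArg β h).trans (s b').2))

lemma image_choiceSet : (choiceSet s).image β = P.parts := by
  ext b
  simp only [mem_image, mem_choiceSet]
  constructor
  · rintro ⟨_, ⟨b', rfl⟩, rfl⟩
    rw [(s b').2]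
    exact b'.2
  · intro hb
    exact ⟨_, ⟨⟨b, hb⟩, rfl⟩, (s ⟨b, hb⟩).2⟩

lemma isExactCover_choiceSet : IsExactCover β (choiceSet s) := by
  refine ⟨fun i => card_eq_one.2 ⟨s ⟨P.part i, P.part_mem.2 (mem_univ i)⟩, ?_⟩, ?_⟩
  · ext j
    simp only [mem_filter, mem_singleton, mem_choiceSet]
    constructor
    · rintro ⟨⟨b, rfl⟩, hi⟩
      rw [(s b).2] at hi
      obtain rfl : b = ⟨P.part i, P.part_mem.2 (mem_univ i)⟩ :=
        Subtype.ext (P.part_eq_of_mem b.2 hi).symm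
      rfl
    · rintro rfl
      refine ⟨⟨_, rfl⟩, ?_⟩
      rw [(s _).2]
      exact P.mem_part_self.2 (mem_univ i)
  · simp only [mem_choiceSet]
    rintro _ ⟨b, rfl⟩
    rw [(s b).2]
    exact P.nonempty_of_mem_parts b.2

end Finpartition

variable {β} [Fintype τ]

namespace IsExactCover

variable {Y : Finset κ} (hY : IsExactCover β Y)

lemma exists_mem_eq (b : hY.toFinpartition.parts) : ∃ j ∈ Y, β j = b :=
  mem_image.1 b.2

noncomputable def choice (b : hY.toFinpartition.parts) : {j // β j = b} :=
  ⟨(hY.exists_mem_eq b).choose, (hY.exists_mem_eq b).choose_spec.2⟩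

lemma choice_mem (b : hY.toFinpartition.parts) : (hY.choice b : κ) ∈ Y :=
  (hY.exists_mem_eq b).choose_spec.1

variable [DecidableEq κ]

lemma choiceSet_choice : Finpartition.choiceSet hY.choice = Y := by
  ext j
  rw [Finpartition.mem_choiceSet]
  constructor
  · rintro ⟨b, rfl⟩
    exact hY.choice_mem b
  · intro hj
    refine ⟨⟨β j, mem_image_of_mem β hj⟩, hY.injOn (hY.choice_mem _) hj ?_⟩
    exact (hY.choice _).2

end IsExactCover

variable [DecidableEq κ]

variable (β) in
noncomputable def choiceSetEquiv (p : ℕ) :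
    (Σ P : {P : Finpartition (univ : Finset τ) // #P.parts = p},
      ∀ b : P.1.parts, {j // β j = b}) ≃ {Y : Finset κ // #Y = p ∧ IsExactCover β Y} := by
  refine Equiv.ofBijective (fun x => ⟨Finpartition.choiceSet x.2,
    (Finpartition.card_choiceSet x.2).trans x.1.2, Finpartition.isExactCover_choiceSet x.2⟩)
    ⟨?_, fun ⟨Y, hp, hY⟩ => ?_⟩
  · rintro ⟨⟨P, hP⟩, s⟩ ⟨⟨Q, hQ⟩, t⟩ h
    have hY : Finpartition.choiceSet s = Finpartition.choiceSet t := congrArg Subtype.val h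
    obtain rfl : P = Q := Finpartition.ext <| by
      rw [← Finpartition.image_choiceSet s, ← Finpartition.image_choiceSet t, hY]
    obtain rfl : s = t := funext fun b => Subtype.ext <|
      (Finpartition.isExactCover_choiceSet t).injOn
        (hY ▸ (Finpartition.mem_choiceSet s).2 ⟨b, rfl⟩)
        ((Finpartition.mem_choiceSet t).2 ⟨b, rfl⟩)
        ((s b).2.trans (t b).2.symm)
    rfl
  · exact ⟨⟨⟨hY.toFinpartition, hY.card_parts_toFinpartition.trans hp⟩, hY.choice⟩,
      Subtype.ext hY.choiceSet_choice⟩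

theorem card_isExactCover [Finite κ] {r : ℕ}
    (hβ : ∀ b : Finset τ, b.Nonempty → Nat.card {j // β j = b} = r) (p : ℕ) :
    Nat.card {Y : Finset κ // #Y = p ∧ IsExactCover β Y} =
      stirlingSnd (Fintype.card τ) p * r ^ p := by
  rw [← Nat.card_congr (choiceSetEquiv β p), Nat.card_sigma,
    ← card_finpartition_univ_eq_stirlingSnd, Nat.card_eq_fintype_card, ← smul_eq_mul,
    ← Finset.card_univ, ← sum_const]
  refine sum_congr rfl fun P _ => ?_
  rw [Nat.card_pi, Finset.prod_congr rfl fun b _ => hβ b.1 (P.1.nonempty_of_mem_parts b.2),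
    prod_const, card_univ, Fintype.card_coe, P.2]

end ExactCover

section SupportIn

variable {α : Type*}

def supportIn (T : Finset α) (v : α → ZMod 2) : Finset T := {i | v i = 1}

@[simp]
lemma mem_supportIn {T : Finset α} {v : α → ZMod 2} {i : T} :
    i ∈ supportIn T v ↔ v i = 1 := by
  simp [supportIn]

variable [DecidableEq α]

lemma supportIn_eq_iff {T : Finset α} {v : α → ZMod 2} {b : Finset T} :
    supportIn T v = b ↔ ∀ i : T, v i = if i ∈ b then 1 else 0 := by
  have ne_one_iff : ∀ x : ZMod 2, x ≠ 1 ↔ x = 0 := by decide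
  simp only [Finset.ext_iff, mem_supportIn]
  refine forall_congr' fun i => ?_
  split_ifs with hi <;> simp [hi, ← ne_one_iff]

lemma card_funs_extending {M : Type*} [Fintype α] (T : Finset α) (w : T → M) :
    Nat.card {v : α → M // ∀ i : T, v i = w i} = Nat.card M ^ (Fintype.card α - #T) := by
  let e : {v : α → M // ∀ i : T, v i = w i} ≃ ({i // i ∉ T} → M) :=
    { toFun v i := v.1 i
      invFun g :=
        ⟨fun i => if hi : i ∈ T then w ⟨i, hi⟩ else g ⟨i, hi⟩, fun i => by simp⟩
      left_inv v := Subtype.ext <| funext fun i => by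
        by_cases hi : i ∈ T
        · simp [hi, v.2 ⟨i, hi⟩]
        · simp [hi]
      right_inv g := funext fun i => by simp [i.2] }
  rw [Nat.card_congr e, Nat.card_fun, Nat.card_eq_fintype_card (α := {i // i ∉ T}),
    Fintype.card_subtype_compl, Fintype.card_coe]

lemma card_supportIn_eq [Fintype α] (T : Finset α) (b : Finset T) :
    Nat.card {v : α → ZMod 2 // supportIn T v = b} = 2 ^ (Fintype.card α - #T) := by
  simp_rw [supportIn_eq_iff]
  rw [card_funs_extending, Nat.card_zmod]

lemma isExactCover_supportIn_iff {κ : Type*} (M : Matrix α κ (ZMod 2)) (T : Finset α)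
    (Y : Finset κ) :
    IsExactCover (fun j => supportIn T (M · j)) Y ↔
      (∀ i ∈ T, #(Y.filter fun j => M i j = 1) = 1) ∧
        ∀ j ∈ Y, ∃ i ∈ T, M i j = 1 := by
  simp [IsExactCover, Finset.Nonempty]

end SupportIn

section Hamming

variable {m : ℕ} {H : Matrix (Fin m) (Fin (2 ^ m - 1)) (ZMod 2)}

noncomputable def columnEquiv
    (hinj : Function.Injective (fun j : Fin (2 ^ m - 1) => fun i => H i j))
    (hnz : ∀ j, (fun i => H i j) ≠ (0 : Fin m → ZMod 2)) :
    Fin (2 ^ m - 1) ≃ {v : Fin m → ZMod 2 // v ≠ 0} :=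
  Equiv.ofBijective (fun j => ⟨fun i => H i j, hnz j⟩) <|
    (Fintype.bijective_iff_injective_and_card _).2
      ⟨fun _ _ h => hinj (congrArg Subtype.val h), by simp [Fintype.card_subtype_compl]⟩

lemma card_column_supportIn_eq
    (hinj : Function.Injective (fun j : Fin (2 ^ m - 1) => fun i => H i j))
    (hnz : ∀ j, (fun i => H i j) ≠ (0 : Fin m → ZMod 2)) (T : Finset (Fin m)) {b : Finset T}
    (hb : b.Nonempty) :
    Nat.card {j // supportIn T (H · j) = b} = 2 ^ (m - #T) := by
  have ne_zero {v : Fin m → ZMod 2} (hv : supportIn T v = b) : v ≠ 0 := by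
    rintro rfl
    simp [← hv, supportIn] at hb
  calc Nat.card {j // supportIn T (H · j) = b}
      = Nat.card {v : {v : Fin m → ZMod 2 // v ≠ 0} // supportIn T v.1 = b} :=
        Nat.card_congr ((columnEquiv hinj hnz).subtypeEquiv fun _ => Iff.rfl)
    _ = Nat.card {v : Fin m → ZMod 2 // supportIn T v = b} :=
        Nat.card_congr (Equiv.subtypeSubtypeEquivSubtype ne_zero)
    _ = 2 ^ (m - #T) := by rw [card_supportIn_eq, Fintype.card_fin]

end Hamming

theorem stmt8_general (m : ℕ) (H : Matrix (Fin m) (Fin (2 ^ m - 1)) (ZMod 2))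
    (hinj : Function.Injective (fun j : Fin (2 ^ m - 1) => fun i => H i j))
    (hnz : ∀ j, (fun i => H i j) ≠ (0 : Fin m → ZMod 2))
    (T : Finset (Fin m)) (p : ℕ) :
    Nat.card {Y : Finset (Fin (2 ^ m - 1)) // Y.card = p ∧
        (∀ i ∈ T, (Y.filter fun j => H i j = 1).card = 1) ∧
        (∀ j ∈ Y, ∃ i ∈ T, H i j = 1)} =
      stirlingSnd T.card p * 2 ^ ((m - T.card) * p) := by
  simp_rw [← isExactCover_supportIn_iff]
  rw [card_isExactCover (fun _ => card_column_supportIn_eq hinj hnz T), Fintype.card_coe,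
    pow_mul]

/-- For the full-rank parity-check matrix of the Hamming code and a nonempty row subset
`T` with `|T| = t`, the number of `p`-element column subsets `Y` such that the submatrix
on rows `T` and columns `Y` has every row of weight one and every column nonzero equals
`S(t,p) · 2^{(m−t)p}`. -/
theorem stmt8 (m : ℕ) (H : Matrix (Fin m) (Fin (2 ^ m - 1)) (ZMod 2))
    (hinj : Function.Injective (fun j : Fin (2 ^ m - 1) => fun i => H i j))
    (hnz : ∀ j, (fun i => H i j) ≠ (0 : Fin m → ZMod 2))
    (T : Finset (Fin m)) (hT : T.Nonempty) (p : ℕ) :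
    Nat.card {Y : Finset (Fin (2 ^ m - 1)) // Y.card = p ∧
        (∀ i ∈ T, (Y.filter fun j => H i j = 1).card = 1) ∧
        (∀ j ∈ Y, ∃ i ∈ T, H i j = 1)} =
      stirlingSnd T.card p * 2 ^ ((m - T.card) * p) :=
  stmt8_general m H hinj hnz T p
end

section
/- Let H be the m×(2^m−1) parity-check matrix of the Hamming code whose columns are all distinct nonzero vectors of F_2^m. Then the number of stopping sets of H of size l equals ∑_{t=0}^{m} (−1)^t C(m,t) ∑_{p=0}^{l} S(t,p) · 2^{(m−t)p} · C(2^{m−t}−1, l−p), for all 0 ≤ l ≤ 2^m − 1. -/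
open Finset

lemma natCard_subtype {α : Type*} [Fintype α] (p : α → Prop) [DecidablePred p] :
    Nat.card {x // p x} = (Finset.univ.filter p).card := by
  rw [Nat.card_eq_fintype_card, Fintype.card_subtype]


lemma zmod2_ne_zero_iff {x : ZMod 2} : x ≠ 0 ↔ x = 1 := by revert x; decide

lemma card_filter_eq_one_iff {α : Type*} {s : Finset α} {q : α → Prop} [DecidablePred q] :
    (s.filter q).card = 1 ↔ ∃! a, a ∈ s ∧ q a := by
  rw [Finset.card_eq_one]
  constructor
  · rintro ⟨a, ha⟩
    have haf : a ∈ s.filter q := ha ▸ Finset.mem_singleton_self a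
    rw [Finset.mem_filter] at haf
    refine ⟨a, haf, fun b hb => ?_⟩
    have : b ∈ s.filter q := Finset.mem_filter.2 hb
    rw [ha, Finset.mem_singleton] at this
    exact this
  · rintro ⟨a, ha, hu⟩
    refine ⟨a, ?_⟩
    ext b
    simp only [Finset.mem_filter, Finset.mem_singleton]
    exact ⟨fun hb => hu b hb, fun hb => hb ▸ ⟨ha.1, ha.2⟩⟩

abbrev Vp (t n : ℕ) := {w : (Fin t → ZMod 2) × (Fin n → ZMod 2) // w ≠ 0}

section countX

variable {t n p : ℕ}

/-- indicator vector of a finset -/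
def ind (b : Finset (Fin t)) : Fin t → ZMod 2 := fun i => if i ∈ b then 1 else 0

lemma ind_eq_one_iff {b : Finset (Fin t)} {i : Fin t} : ind b i = 1 ↔ i ∈ b := by
  unfold ind
  split_ifs with h <;> simp [h]

lemma ind_injective : Function.Injective (ind (t := t)) := by
  intro b b' h
  ext i
  rw [← ind_eq_one_iff, ← ind_eq_one_iff (b := b'), h]

lemma ind_ne_zero {b : Finset (Fin t)} (hb : b.Nonempty) : ind b ≠ 0 := by
  obtain ⟨i, hi⟩ := hb
  intro h
  have := congrFun h i
  rw [ind_eq_one_iff.2 hi] at this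
  exact one_ne_zero this

/-- the type of partition data -/
abbrev PD (t n p : ℕ) :=
  Σ P : {P : Finpartition (Finset.univ : Finset (Fin t)) // P.parts.card = p},
    (↥(P.1.parts) → (Fin n → ZMod 2))

def FF (P : Finpartition (Finset.univ : Finset (Fin t))) (g : ↥P.parts → (Fin n → ZMod 2))
    (b : ↥P.parts) : Vp t n :=
  ⟨(ind b.1, g b), by
    intro h
    have h1 : ind b.1 = 0 := congrArg Prod.fst h
    exact ind_ne_zero (Finset.nonempty_iff_ne_empty.2 fun he =>
      P.bot_notMem (by rw [Finset.bot_eq_empty, ← he]; exact b.2)) h1⟩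

lemma FF_injective (P : Finpartition (Finset.univ : Finset (Fin t)))
    (g : ↥P.parts → (Fin n → ZMod 2)) : Function.Injective (FF P g) := by
  intro b b' h
  have h1 : ind b.1 = ind b'.1 := congrArg (Prod.fst ∘ Subtype.val) h
  exact Subtype.ext (ind_injective h1)

def bwdFun (y : PD t n p) : Finset (Vp t n) :=
  Finset.univ.image (FF y.1.1 y.2)

lemma mem_bwdFun {y : PD t n p} {w : Vp t n} :
    w ∈ bwdFun y ↔ ∃ b : ↥y.1.1.parts, FF y.1.1 y.2 b = w := by
  simp [bwdFun]

lemma bwdFun_prop (y : PD t n p) :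
    (∀ w ∈ bwdFun y, w.1.1 ≠ 0) ∧
      (∀ i, ((bwdFun y).filter (fun w => w.1.1 i = 1)).card = 1) ∧ (bwdFun y).card = p := by
  obtain ⟨⟨P, hP⟩, g⟩ := y
  refine ⟨?_, ?_, ?_⟩
  · intro w hw
    obtain ⟨b, hb⟩ := mem_bwdFun.1 hw
    rw [← hb]
    exact ind_ne_zero (Finset.nonempty_iff_ne_empty.2 fun he =>
      P.bot_notMem (by rw [Finset.bot_eq_empty, ← he]; exact b.2))
  · intro i
    rw [card_filter_eq_one_iff]
    obtain ⟨b0, ⟨hb0m, hb0i⟩, hb0u⟩ := P.existsUnique_mem (a := i) (Finset.mem_univ i)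
    refine ⟨FF P g ⟨b0, hb0m⟩, ⟨mem_bwdFun.2 ⟨⟨b0, hb0m⟩, rfl⟩, ?_⟩, ?_⟩
    · show ind b0 i = 1
      exact ind_eq_one_iff.2 hb0i
    · rintro w ⟨hwm, hwi⟩
      obtain ⟨b, hb⟩ := mem_bwdFun.1 hwm
      have hib : i ∈ b.1 := by
        rw [← hb] at hwi
        exact ind_eq_one_iff.1 hwi
      have : b.1 = b0 := hb0u b.1 ⟨b.2, hib⟩
      rw [← hb]
      congr 1
      exact Subtype.ext this
  · rw [bwdFun]
    rw [Finset.card_image_of_injective _ (FF_injective P g), Finset.card_univ,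
      Fintype.card_coe, hP]

def suppH {t n : ℕ} (w : Vp t n) : Finset (Fin t) :=
  Finset.univ.filter (fun i => w.1.1 i = 1)

lemma mem_suppH {w : Vp t n} {i : Fin t} : i ∈ suppH w ↔ w.1.1 i = 1 := by
  simp [suppH]

lemma ind_suppH (w : Vp t n) : ind (suppH w) = w.1.1 := by
  funext i
  have h2 : ∀ x : ZMod 2, x = 0 ∨ x = 1 := by decide
  unfold ind
  rcases h2 (w.1.1 i) with h | h
  · rw [h, if_neg]
    rw [mem_suppH, h]
    intro hc
    exact one_ne_zero hc.symm
  · rw [h, if_pos (mem_suppH.2 h)]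

theorem countX (t n p : ℕ) :
    Nat.card {B : Finset (Vp t n) // (∀ w ∈ B, w.1.1 ≠ 0) ∧
        (∀ i, (B.filter (fun w => w.1.1 i = 1)).card = 1) ∧ B.card = p}
      = stirlingSnd t p * 2 ^ (n * p) := by
  classical
  have hbij : Function.Bijective
      (fun y : PD t n p => (⟨bwdFun y, bwdFun_prop y⟩ :
        {B : Finset (Vp t n) // (∀ w ∈ B, w.1.1 ≠ 0) ∧
          (∀ i, (B.filter (fun w => w.1.1 i = 1)).card = 1) ∧ B.card = p})) := by
    constructor
    · -- injective
      rintro ⟨⟨P, hP⟩, g⟩ ⟨⟨Q, hQ⟩, g'⟩ h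
      have hBB : bwdFun (⟨⟨P, hP⟩, g⟩ : PD t n p) = bwdFun ⟨⟨Q, hQ⟩, g'⟩ :=
        congrArg Subtype.val h
      have hparts : P.parts = Q.parts := by
        ext b
        constructor
        · intro hb
          have : FF P g ⟨b, hb⟩ ∈ bwdFun (⟨⟨Q, hQ⟩, g'⟩ : PD t n p) := by
            rw [← hBB]
            exact mem_bwdFun.2 ⟨⟨b, hb⟩, rfl⟩
          obtain ⟨c, hc⟩ := mem_bwdFun.1 this
          have : ind c.1 = ind b := congrArg (Prod.fst ∘ Subtype.val) hc
          have := ind_injective this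
          rw [← this]
          exact c.2
        · intro hb
          have : FF Q g' ⟨b, hb⟩ ∈ bwdFun (⟨⟨P, hP⟩, g⟩ : PD t n p) := by
            rw [hBB]
            exact mem_bwdFun.2 ⟨⟨b, hb⟩, rfl⟩
          obtain ⟨c, hc⟩ := mem_bwdFun.1 this
          have : ind c.1 = ind b := congrArg (Prod.fst ∘ Subtype.val) hc
          have := ind_injective this
          rw [← this]
          exact c.2
      have hPQ : P = Q := Finpartition.ext hparts
      subst hPQ
      refine Sigma.ext rfl (heq_of_eq ?_)
      funext b
      have : FF P g b ∈ bwdFun (⟨⟨P, hQ⟩, g'⟩ : PD t n p) := by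
        rw [← hBB]
        exact mem_bwdFun.2 ⟨b, rfl⟩
      obtain ⟨c, hc⟩ := mem_bwdFun.1 this
      have hcb : c = b := by
        have : ind c.1 = ind b.1 := congrArg (Prod.fst ∘ Subtype.val) hc
        exact Subtype.ext (ind_injective this)
      subst hcb
      exact (congrArg (Prod.snd ∘ Subtype.val) hc).symm
    · -- surjective
      rintro ⟨B, hB1, hB2, hB3⟩
      have huniq : ∀ i, ∃! w, w ∈ B ∧ w.1.1 i = 1 := fun i =>
        card_filter_eq_one_iff.1 (hB2 i)
      have hne : ∀ w ∈ B, (suppH w).Nonempty := by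
        intro w hw
        obtain ⟨i, hi⟩ : ∃ i, w.1.1 i ≠ 0 := by
          by_contra hc
          push_neg at hc
          exact hB1 w hw (funext hc)
        exact ⟨i, mem_suppH.2 (zmod2_ne_zero_iff.1 hi)⟩
      have hinjOn : Set.InjOn (suppH (t := t) (n := n)) ↑B := by
        intro w hw w' hw' hss
        obtain ⟨i, hi⟩ := hne w hw
        have hi' : i ∈ suppH w' := hss ▸ hi
        exact ((huniq i).unique ⟨hw, mem_suppH.1 hi⟩ ⟨hw', mem_suppH.1 hi'⟩)
      have hdisj : (↑(B.image suppH) : Set (Finset (Fin t))).PairwiseDisjoint id := by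
        intro b hb b' hb' hbb'
        simp only [Finset.coe_image, Set.mem_image] at hb hb'
        obtain ⟨w, hw, rfl⟩ := hb
        obtain ⟨w', hw', rfl⟩ := hb'
        show Disjoint (suppH w) (suppH w')
        rw [Finset.disjoint_left]
        intro i hi hi'
        exact hbb' (congrArg suppH ((huniq i).unique ⟨hw, mem_suppH.1 hi⟩ ⟨hw', mem_suppH.1 hi'⟩))
      have hsup : (B.image suppH).sup id = Finset.univ := by
        apply Finset.Subset.antisymm
        · exact Finset.subset_univ _
        · intro i _
          obtain ⟨w, ⟨hw, hwi⟩, -⟩ := huniq i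
          rw [Finset.mem_sup]
          exact ⟨suppH w, Finset.mem_image_of_mem _ hw, mem_suppH.2 hwi⟩
      have hbot : ⊥ ∉ B.image suppH := by
        intro hc
        rw [Finset.mem_image] at hc
        obtain ⟨w, hw, hwe⟩ := hc
        obtain ⟨i, hi⟩ := hne w hw
        rw [hwe] at hi
        exact Finset.notMem_empty i hi
      let P : Finpartition (Finset.univ : Finset (Fin t)) :=
        ⟨B.image suppH, Finset.supIndep_iff_pairwiseDisjoint.2 hdisj, hsup, hbot⟩
      have hP : P.parts.card = p := by
        show (B.image suppH).card = p
        rw [Finset.card_image_of_injOn hinjOn, hB3]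
      have hchoose : ∀ b : ↥P.parts, ∃! w, w ∈ B ∧ suppH w = b.1 := by
        rintro ⟨b, hb⟩
        have hb' : b ∈ B.image suppH := hb
        rw [Finset.mem_image] at hb'
        obtain ⟨w, hw, hwb⟩ := hb'
        exact ⟨w, ⟨hw, hwb⟩, fun w' ⟨hw', hwb'⟩ => hinjOn hw' hw (hwb'.trans hwb.symm)⟩
      let g : ↥P.parts → (Fin n → ZMod 2) :=
        fun b => (B.choose (fun w => suppH w = b.1) (hchoose b)).1.2
      refine ⟨⟨⟨P, hP⟩, g⟩, ?_⟩
      apply Subtype.ext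
      show bwdFun (⟨⟨P, hP⟩, g⟩ : PD t n p) = B
      have hFF : ∀ b : ↥P.parts, FF P g b = B.choose (fun w => suppH w = b.1) (hchoose b) := by
        intro b
        set w := B.choose (fun w => suppH w = b.1) (hchoose b) with hw
        have hwp : suppH w = b.1 := Finset.choose_property _ B (hchoose b)
        apply Subtype.ext
        show (ind b.1, g b) = w.1
        have h1 : ind b.1 = w.1.1 := by rw [← hwp, ind_suppH]
        exact Prod.ext h1 rfl
      ext w
      rw [mem_bwdFun]
      constructor
      · rintro ⟨b, rfl⟩
        rw [hFF b]
        exact Finset.choose_mem _ B (hchoose b)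
      · intro hw
        have hb : suppH w ∈ P.parts := Finset.mem_image_of_mem _ hw
        refine ⟨⟨suppH w, hb⟩, ?_⟩
        rw [hFF ⟨suppH w, hb⟩]
        have := Finset.choose_property (fun w' => suppH w' = suppH w) B (hchoose ⟨suppH w, hb⟩)
        exact hinjOn (Finset.choose_mem _ B (hchoose ⟨suppH w, hb⟩)) hw this
  rw [← Nat.card_congr (Equiv.ofBijective _ hbij)]
  -- now compute Nat.card (PD t n p)
  have e : PD t n p ≃
      {P : Finpartition (Finset.univ : Finset (Fin t)) // P.parts.card = p} ×
        (Fin p → (Fin n → ZMod 2)) :=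
    (Equiv.sigmaCongrRight (fun P =>
      Equiv.arrowCongr (Finset.equivFinOfCardEq P.2) (Equiv.refl (Fin n → ZMod 2)))).trans
      (Equiv.sigmaEquivProd _ _)
  rw [Nat.card_congr e, Nat.card_prod]
  congr 1
  rw [Nat.card_fun, Nat.card_fun]
  simp [Nat.card_eq_fintype_card, pow_mul]

lemma zcount (t n q : ℕ) :
    ((Finset.univ.filter (fun C : Finset (Vp t n) => (∀ w ∈ C, w.1.1 = 0) ∧ C.card = q)).card)
      = (2 ^ n - 1).choose q := by
  classical
  set V0 : Finset (Vp t n) := Finset.univ.filter (fun w => w.1.1 = 0) with hV0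
  have h1 : Finset.univ.filter (fun C : Finset (Vp t n) => (∀ w ∈ C, w.1.1 = 0) ∧ C.card = q)
      = V0.powersetCard q := by
    ext C
    simp only [Finset.mem_filter, Finset.mem_univ, true_and, Finset.mem_powersetCard, hV0]
    constructor
    · rintro ⟨h1, h2⟩
      exact ⟨fun w hw => Finset.mem_filter.2 ⟨Finset.mem_univ w, h1 w hw⟩, h2⟩
    · rintro ⟨h1, h2⟩
      exact ⟨fun w hw => (Finset.mem_filter.1 (h1 hw)).2, h2⟩
  rw [h1, Finset.card_powersetCard]
  congr 1
  have h2 : V0.card = Fintype.card {w : Vp t n // w.1.1 = 0} := by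
    rw [Fintype.card_subtype]
  rw [h2]
  have e : {w : Vp t n // w.1.1 = 0} ≃ {x : Fin n → ZMod 2 // x ≠ 0} := by
    refine ⟨fun w => ⟨w.1.1.2, ?_⟩, fun x => ⟨⟨(0, x.1), ?_⟩, rfl⟩, ?_, ?_⟩
    · intro hx
      apply w.1.2
      have : w.1.1 = (w.1.1.1, w.1.1.2) := rfl
      rw [Prod.ext_iff]
      exact ⟨w.2, hx⟩
    · intro h
      apply x.2
      have := congrArg Prod.snd h
      exact this
    · rintro ⟨⟨⟨h, x⟩, hne⟩, h0⟩
      simp only [Subtype.mk.injEq, Prod.mk.injEq]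
      exact ⟨h0.symm, trivial⟩
    · rintro ⟨x, hx⟩
      rfl
  rw [Fintype.card_congr e]
  have h0 : Fintype.card {v : Fin n → ZMod 2 // v = 0} = 1 := Fintype.card_subtype_eq 0
  have hc := Fintype.card_subtype_compl (fun v : Fin n → ZMod 2 => v = 0)
  simp only [h0] at hc
  have h3 : Fintype.card {x : Fin n → ZMod 2 // x ≠ 0}
      = Fintype.card {x : Fin n → ZMod 2 // ¬ x = 0} := rfl
  rw [h3, hc]
  simp

lemma countD' (t n l : ℕ) :
    Nat.card {A : Finset (Vp t n) // (∀ i, (A.filter (fun w => w.1.1 i = 1)).card = 1) ∧ A.card = l}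
      = ∑ p ∈ range (l + 1), stirlingSnd t p * 2 ^ (n * p) * (2 ^ n - 1).choose (l - p) := by
  classical
  rw [natCard_subtype]
  have key : (Finset.univ.filter (fun A : Finset (Vp t n) =>
        (∀ i, (A.filter (fun w => w.1.1 i = 1)).card = 1) ∧ A.card = l)).card
      = ((range (l + 1)).sigma (fun p =>
          (Finset.univ.filter (fun B : Finset (Vp t n) => (∀ w ∈ B, w.1.1 ≠ 0) ∧
            (∀ i, (B.filter (fun w => w.1.1 i = 1)).card = 1) ∧ B.card = p)) ×ˢ
          (Finset.univ.filter (fun C : Finset (Vp t n) =>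
            (∀ w ∈ C, w.1.1 = 0) ∧ C.card = l - p)))).card := by
    refine Finset.card_bij'
      (fun A _ => ⟨(A.filter (fun w => w.1.1 ≠ 0)).card,
        (A.filter (fun w => w.1.1 ≠ 0), A.filter (fun w => ¬ w.1.1 ≠ 0))⟩)
      (fun x _ => x.2.1 ∪ x.2.2) ?_ ?_ ?_ ?_
    · -- forward maps in
      intro A hA
      rw [Finset.mem_filter] at hA
      obtain ⟨-, h1, h2⟩ := hA
      have hcards := Finset.card_filter_add_card_filter_not
        (s := A) (p := fun w : Vp t n => w.1.1 ≠ 0)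
      rw [Finset.mem_sigma, Finset.mem_product]
      refine ⟨?_, ?_, ?_⟩
      · rw [Finset.mem_range]
        have := Finset.card_filter_le A (fun w : Vp t n => w.1.1 ≠ 0)
        dsimp only
        omega
      · rw [Finset.mem_filter]
        refine ⟨Finset.mem_univ _, fun w hw => (Finset.mem_filter.1 hw).2, fun i => ?_, rfl⟩
        rw [Finset.filter_filter]
        rw [Finset.filter_congr (fun w _ => ?_ :
          ∀ w ∈ A, ((w.1.1 ≠ 0) ∧ w.1.1 i = 1 ↔ w.1.1 i = 1))]
        · exact h1 i
        · constructor
          · exact fun h => h.2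
          · intro h
            refine ⟨fun h0 => ?_, h⟩
            rw [h0] at h
            simp at h
      · rw [Finset.mem_filter]
        refine ⟨Finset.mem_univ _, fun w hw => ?_, ?_⟩
        · have := (Finset.mem_filter.1 hw).2
          exact not_not.1 this
        · dsimp only
          omega
    · -- backward maps in
      rintro ⟨p, B, C⟩ hx
      rw [Finset.mem_sigma, Finset.mem_product, Finset.mem_range, Finset.mem_filter,
        Finset.mem_filter] at hx
      obtain ⟨hp, ⟨-, hB1, hB2, hB3⟩, ⟨-, hC1, hC2⟩⟩ := hx
      have hdisj : Disjoint B C := by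
        rw [Finset.disjoint_left]
        intro w hwB hwC
        exact hB1 w hwB (hC1 w hwC)
      rw [Finset.mem_filter]
      refine ⟨Finset.mem_univ _, fun i => ?_, ?_⟩
      · rw [Finset.filter_union]
        have : C.filter (fun w => w.1.1 i = 1) = ∅ := by
          rw [Finset.filter_eq_empty_iff]
          intro w hw
          rw [hC1 w hw]
          simp
        rw [this, Finset.union_empty]
        exact hB2 i
      · rw [Finset.card_union_of_disjoint hdisj, hB3, hC2]
        omega
    · -- left inverse
      intro A hA
      exact Finset.filter_union_filter_not_eq _ A
    · -- right inverse
      rintro ⟨p, B, C⟩ hx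
      dsimp only
      rw [Finset.mem_sigma, Finset.mem_product, Finset.mem_range, Finset.mem_filter,
        Finset.mem_filter] at hx
      obtain ⟨hp, ⟨-, hB1, hB2, hB3⟩, ⟨-, hC1, hC2⟩⟩ := hx
      have e1 : (B ∪ C).filter (fun w : Vp t n => w.1.1 ≠ 0) = B := by
        rw [Finset.filter_union, Finset.filter_true_of_mem hB1,
          Finset.filter_false_of_mem, Finset.union_empty]
        intro w hw
        rw [not_not]
        exact hC1 w hw
      have e2 : (B ∪ C).filter (fun w : Vp t n => ¬ w.1.1 ≠ 0) = C := by
        rw [Finset.filter_union, Finset.filter_false_of_mem, Finset.filter_true_of_mem,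
          Finset.empty_union]
        · intro w hw
          rw [not_not]
          exact hC1 w hw
        · intro w hw
          rw [not_not]
          exact hB1 w hw
      have e3 : ((B ∪ C).filter (fun w : Vp t n => w.1.1 ≠ 0)).card = p := by rw [e1, hB3]
      refine Sigma.ext e3 (heq_of_eq ?_)
      rw [Prod.ext_iff]
      exact ⟨e1, e2⟩
  rw [key, Finset.card_sigma]
  refine Finset.sum_congr rfl fun p _ => ?_
  rw [Finset.card_product, zcount t n (l - p), ← natCard_subtype, countX t n p]

abbrev Vm (m : ℕ) := {v : Fin m → ZMod 2 // v ≠ 0}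

lemma cnt_eq (m : ℕ) (T : Finset (Fin m)) (l : ℕ) :
    Nat.card {A : Finset (Vm m) // (∀ i ∈ T, (A.filter (fun v => v.1 i = 1)).card = 1) ∧ A.card = l}
      = ∑ p ∈ range (l + 1), stirlingSnd T.card p * 2 ^ ((m - T.card) * p) *
          (2 ^ (m - T.card) - 1).choose (l - p) := by
  classical
  have hTc : (Tᶜ : Finset (Fin m)).card = m - T.card := by
    rw [Finset.card_compl]
    simp
  let eT : ↥T ≃ Fin T.card := T.equivFin
  let eC : {a : Fin m // ¬ a ∈ T} ≃ Fin (m - T.card) :=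
    (Equiv.subtypeEquivRight (fun a => (Finset.mem_compl (s := T)).symm)).trans
      (Finset.equivFinOfCardEq hTc)
  let Φ : (Fin m → ZMod 2) ≃ (Fin T.card → ZMod 2) × (Fin (m - T.card) → ZMod 2) :=
    (((Equiv.sumCompl (fun a => a ∈ T)).symm).arrowCongr (Equiv.refl (ZMod 2))).trans
      ((Equiv.sumArrowEquivProdArrow _ _ _).trans
        (Equiv.prodCongr (Equiv.arrowCongr eT (Equiv.refl (ZMod 2)))
          (Equiv.arrowCongr eC (Equiv.refl (ZMod 2)))))
  have hfst : ∀ (v : Fin m → ZMod 2) (j : Fin T.card), (Φ v).1 j = v ((eT.symm j : ↥T) : Fin m) := by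
    intro v j
    rfl
  have hΦ0 : Φ 0 = 0 := by
    have h1 : (Φ 0).1 = 0 := by funext j; exact hfst 0 j
    have h2 : (Φ 0).2 = 0 := by funext x; rfl
    rw [Prod.ext_iff]
    exact ⟨h1, h2⟩
  have hne : ∀ v : Fin m → ZMod 2, Φ v = 0 ↔ v = 0 := by
    intro v
    rw [← hΦ0]
    exact Equiv.apply_eq_iff_eq Φ
  let ΦV : Vm m ≃ Vp T.card (m - T.card) :=
    Φ.subtypeEquiv (fun v => not_congr (hne v).symm)
  rw [← countD' T.card (m - T.card) l]
  refine Nat.card_congr ((Equiv.finsetCongr ΦV).subtypeEquiv fun A => ?_)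
  rw [Equiv.finsetCongr_apply]
  have hfilt : ∀ (j : Fin T.card),
      ((A.map ΦV.toEmbedding).filter (fun w => w.1.1 j = 1)).card
        = (A.filter (fun v => v.1 ((eT.symm j : ↥T) : Fin m) = 1)).card := by
    intro j
    rw [Finset.filter_map, Finset.card_map]
    refine congrArg Finset.card (Finset.filter_congr fun v _ => ?_)
    show (ΦV v).1.1 j = 1 ↔ _
    rw [show (ΦV v).1.1 j = v.1 ((eT.symm j : ↥T) : Fin m) from hfst v.1 j]
  constructor
  · rintro ⟨h1, h2⟩
    refine ⟨fun j => ?_, by rw [Finset.card_map]; exact h2⟩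
    rw [hfilt j]
    exact h1 _ (eT.symm j).2
  · rintro ⟨h1, h2⟩
    refine ⟨fun i hi => ?_, by rw [Finset.card_map] at h2; exact h2⟩
    have := h1 (eT ⟨i, hi⟩)
    rw [hfilt] at this
    simpa using this

lemma IE (m l : ℕ) :
    (Nat.card {A : Finset (Vm m) // (∀ i, (A.filter (fun v => v.1 i = 1)).card ≠ 1) ∧ A.card = l} : ℤ)
      = ∑ T ∈ (Finset.univ : Finset (Fin m)).powerset, (-1 : ℤ) ^ T.card *
          Nat.card {A : Finset (Vm m) // (∀ i ∈ T, (A.filter (fun v => v.1 i = 1)).card = 1) ∧ A.card = l} := by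
  classical
  rw [natCard_subtype]
  have key : ∀ A : Finset (Vm m),
      (if (∀ i, (A.filter (fun v => v.1 i = 1)).card ≠ 1) then (1 : ℤ) else 0)
        = ∑ T ∈ (Finset.univ : Finset (Fin m)).powerset,
            (if (∀ i ∈ T, (A.filter (fun v => v.1 i = 1)).card = 1) then (-1 : ℤ) ^ T.card else 0) := by
    intro A
    set Bad := Finset.univ.filter (fun i => (A.filter (fun v => v.1 i = 1)).card = 1) with hBad
    have h1 : ∀ T : Finset (Fin m),
        (∀ i ∈ T, (A.filter (fun v => v.1 i = 1)).card = 1) ↔ T ⊆ Bad := by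
      intro T
      constructor
      · intro h i hi
        rw [hBad, mem_filter]
        exact ⟨mem_univ i, h i hi⟩
      · intro h i hi
        have := h hi
        rw [hBad, mem_filter] at this
        exact this.2
    have h2 : ∑ T ∈ (Finset.univ : Finset (Fin m)).powerset,
          (if T ⊆ Bad then ((-1 : ℤ) ^ T.card) else 0)
        = ∑ T ∈ Bad.powerset, (-1 : ℤ) ^ T.card := by
      rw [← Finset.sum_filter]
      congr 1
      ext T
      simp [Finset.mem_powerset, Finset.subset_univ, Finset.mem_filter]
    rw [Finset.sum_congr rfl (fun T _ => if_congr (h1 T) rfl rfl), h2,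
      Finset.sum_powerset_neg_one_pow_card]
    refine if_congr ?_ rfl rfl
    rw [hBad]
    simp [Finset.filter_eq_empty_iff]
  calc ((Finset.univ.filter (fun A : Finset (Vm m) =>
        (∀ i, (A.filter (fun v => v.1 i = 1)).card ≠ 1) ∧ A.card = l)).card : ℤ)
      = ∑ A : Finset (Vm m), (if (∀ i, (A.filter (fun v => v.1 i = 1)).card ≠ 1) then (1 : ℤ) else 0)
          * (if A.card = l then (1 : ℤ) else 0) := by
        rw [← Finset.sum_boole]
        exact Finset.sum_congr rfl fun A _ => by
          by_cases h1 : (∀ i, (A.filter (fun v => v.1 i = 1)).card ≠ 1) <;>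
            by_cases h2 : A.card = l <;> simp [h1, h2]
    _ = ∑ A : Finset (Vm m), ∑ T ∈ (Finset.univ : Finset (Fin m)).powerset,
          (if (∀ i ∈ T, (A.filter (fun v => v.1 i = 1)).card = 1) then (-1 : ℤ) ^ T.card else 0)
          * (if A.card = l then (1 : ℤ) else 0) := by
        refine Finset.sum_congr rfl fun A _ => ?_
        rw [key A, Finset.sum_mul]
    _ = ∑ T ∈ (Finset.univ : Finset (Fin m)).powerset, ∑ A : Finset (Vm m),
          (if (∀ i ∈ T, (A.filter (fun v => v.1 i = 1)).card = 1) then (-1 : ℤ) ^ T.card else 0)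
          * (if A.card = l then (1 : ℤ) else 0) := Finset.sum_comm
    _ = ∑ T ∈ (Finset.univ : Finset (Fin m)).powerset, (-1 : ℤ) ^ T.card *
          Nat.card {A : Finset (Vm m) // (∀ i ∈ T, (A.filter (fun v => v.1 i = 1)).card = 1) ∧ A.card = l} := by
        refine Finset.sum_congr rfl fun T _ => ?_
        rw [natCard_subtype, ← Finset.sum_boole, Finset.mul_sum]
        refine Finset.sum_congr rfl fun A _ => ?_
        by_cases h1 : (∀ i ∈ T, (A.filter (fun v => v.1 i = 1)).card = 1) <;>
          by_cases h2 : A.card = l <;> simp [h1, h2]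

/-- For the full-rank parity-check matrix of the Hamming code, the number of stopping
sets of size `l` equals
`∑_{t=0}^{m} (−1)^t C(m,t) ∑_{p=0}^{l} S(t,p) 2^{(m−t)p} C(2^{m−t}−1, l−p)`. -/
theorem stmt9 (m : ℕ) (H : Matrix (Fin m) (Fin (2 ^ m - 1)) (ZMod 2))
    (hinj : Function.Injective (fun j : Fin (2 ^ m - 1) => fun i => H i j))
    (hnz : ∀ j, (fun i => H i j) ≠ (0 : Fin m → ZMod 2))
    (l : ℕ) (hl : l ≤ 2 ^ m - 1) :
    (numStoppingSets H l : ℤ) =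
      ∑ t ∈ Finset.range (m + 1), (-1 : ℤ) ^ t * (m.choose t) *
        ∑ p ∈ Finset.range (l + 1),
          (stirlingSnd t p : ℤ) * 2 ^ ((m - t) * p) * ((2 ^ (m - t) - 1).choose (l - p)) := by
  classical
  have hcard : Fintype.card (Vm m) = 2 ^ m - 1 := by
    have h0 : Fintype.card {v : Fin m → ZMod 2 // v = 0} = 1 := Fintype.card_subtype_eq 0
    have hc := Fintype.card_subtype_compl (fun v : Fin m → ZMod 2 => v = 0)
    simp only [h0] at hc
    have h2 : Fintype.card (Vm m) = Fintype.card {v : Fin m → ZMod 2 // ¬ v = 0} := rfl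
    rw [h2, hc]
    simp
  obtain ⟨colEquiv, hcol⟩ : ∃ e : Fin (2 ^ m - 1) ≃ Vm m, ∀ j i, (e j).1 i = H i j := by
    refine ⟨Equiv.ofBijective (fun j => ⟨fun i => H i j, hnz j⟩) ?_, fun j i => rfl⟩
    rw [Fintype.bijective_iff_injective_and_card]
    constructor
    · intro a b hab
      exact hinj (by simpa using congrArg Subtype.val hab)
    · simp [hcard]
  have step1 : numStoppingSets H l =
      Nat.card {A : Finset (Vm m) // (∀ i, (A.filter (fun v => v.1 i = 1)).card ≠ 1) ∧ A.card = l} := by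
    refine Nat.card_congr ((Equiv.finsetCongr colEquiv).subtypeEquiv fun S => ?_)
    rw [Equiv.finsetCongr_apply]
    constructor
    · rintro ⟨h1, h2⟩
      refine ⟨fun i => ?_, by rw [Finset.card_map]; exact h2⟩
      rw [Finset.filter_map, Finset.card_map]
      rw [Finset.filter_congr (fun j _ => by
        simp [hcol] : ∀ x ∈ S, ((fun v : Vm m => v.1 i = 1) ∘ (colEquiv.toEmbedding)) x ↔ H i x = 1)]
      exact h1 i
    · rintro ⟨h1, h2⟩
      constructor
      · intro i
        have := h1 i
        rw [Finset.filter_map, Finset.card_map] at this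
        rw [Finset.filter_congr (fun j _ => by
          simp [hcol] : ∀ x ∈ S, ((fun v : Vm m => v.1 i = 1) ∘ (colEquiv.toEmbedding)) x ↔ H i x = 1)] at this
        exact this
      · rw [Finset.card_map] at h2; exact h2
  rw [step1, IE m l]
  have step2 : ∀ T : Finset (Fin m),
      (Nat.card {A : Finset (Vm m) // (∀ i ∈ T, (A.filter (fun v => v.1 i = 1)).card = 1) ∧ A.card = l} : ℤ)
        = ∑ p ∈ range (l + 1), (stirlingSnd T.card p : ℤ) * 2 ^ ((m - T.card) * p) *
            ((2 ^ (m - T.card) - 1).choose (l - p)) := by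
    intro T
    rw [cnt_eq m T l]
    push_cast
    rfl
  calc ∑ T ∈ (Finset.univ : Finset (Fin m)).powerset, (-1 : ℤ) ^ T.card *
          Nat.card {A : Finset (Vm m) // (∀ i ∈ T, (A.filter (fun v => v.1 i = 1)).card = 1) ∧ A.card = l}
      = ∑ T ∈ (Finset.univ : Finset (Fin m)).powerset, ((-1 : ℤ) ^ T.card *
          ∑ p ∈ range (l + 1), (stirlingSnd T.card p : ℤ) * 2 ^ ((m - T.card) * p) *
            ((2 ^ (m - T.card) - 1).choose (l - p))) := by
        exact Finset.sum_congr rfl fun T _ => by rw [step2 T]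
    _ = _ := by
        have := Finset.sum_powerset_apply_card (f := fun k => (-1 : ℤ) ^ k *
          ∑ p ∈ range (l + 1), (stirlingSnd k p : ℤ) * 2 ^ ((m - k) * p) *
            ((2 ^ (m - k) - 1).choose (l - p))) (x := (Finset.univ : Finset (Fin m)))
        rw [this]
        simp only [Finset.card_univ, Fintype.card_fin, nsmul_eq_mul]
        exact Finset.sum_congr rfl fun k _ => by ring
end countX
end

section
/- Define b(q,v) = ∑_{p=0}^{v} (−1)^p C(v,p) s(p+1, p−q+1), where s denotes signed Stirling numbers of the first kind. Then b(q,v) = 0 whenever q > v, b(0,v) = 0 for v ≥ 1, b(q,q) = q!, and for q ≥ 1, v ≥ 2, b(q,v) = v·b(q−1,v−1) − (v−1)·b(q−1,v−2). -/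
open Finset Polynomial

/-- Signed Stirling numbers of the first kind: coefficient of x^k in x(x-1)⋯(x-n+1),
zero for negative k. -/
noncomputable def stirlingFst (n : ℕ) (k : ℤ) : ℤ :=
  if 0 ≤ k then (∏ i ∈ Finset.range n, (X - C (i : ℤ))).coeff k.toNat else 0

/-- b(q,v) = ∑_{p=0}^{v} (−1)^p C(v,p) s(p+1, p−q+1). -/
noncomputable def b (q v : ℕ) : ℤ :=
  ∑ p ∈ Finset.range (v + 1), (-1 : ℤ) ^ p * (v.choose p) * stirlingFst (p + 1) ((p : ℤ) - q + 1)

lemma stirlingFst_neg {n : ℕ} {k : ℤ} (h : k < 0) : stirlingFst n k = 0 := by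
  simp [stirlingFst, not_le.mpr h]

lemma stirlingFst_zero {n : ℕ} (h : 1 ≤ n) : stirlingFst n 0 = 0 := by
  simp only [stirlingFst, if_pos le_rfl, Int.toNat_zero]
  rw [Polynomial.coeff_zero_eq_eval_zero, Polynomial.eval_prod]
  refine Finset.prod_eq_zero (Finset.mem_range.mpr h) ?_
  simp

lemma stirlingFst_nonpos {n : ℕ} {k : ℤ} (hn : 1 ≤ n) (h : k ≤ 0) : stirlingFst n k = 0 := by
  rcases lt_or_eq_of_le h with h' | h'
  · exact stirlingFst_neg h'
  · rw [h']; exact stirlingFst_zero hn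

lemma stirlingFst_diag (n : ℕ) : stirlingFst n (n : ℤ) = 1 := by
  have hmonic : (∏ i ∈ Finset.range n, (X - C (i : ℤ))).Monic :=
    monic_prod_of_monic _ _ (fun i _ => monic_X_sub_C _)
  have hdeg : (∏ i ∈ Finset.range n, (X - C (i : ℤ))).natDegree = n := by
    rw [Polynomial.natDegree_prod _ _ (fun i _ => X_sub_C_ne_zero _)]
    simp only [Polynomial.natDegree_X_sub_C]
    simp
  simp only [stirlingFst, if_pos (Int.ofNat_nonneg n), Int.toNat_natCast]
  have := hmonic.coeff_natDegree
  rwa [hdeg] at this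

lemma stirlingFst_rec (n : ℕ) (k : ℤ) :
    stirlingFst (n + 1) k = stirlingFst n (k - 1) - n * stirlingFst n k := by
  rcases lt_trichotomy k 0 with hk | hk | hk
  · rw [stirlingFst_neg hk, stirlingFst_neg (by omega), stirlingFst_neg hk]; ring
  · subst hk
    rw [stirlingFst_zero (by omega), stirlingFst_neg (by omega)]
    rcases Nat.eq_zero_or_pos n with h | h
    · subst h; simp
    · rw [stirlingFst_zero h]; ring
  · -- k ≥ 1
    obtain ⟨m, hm⟩ : ∃ m : ℕ, k = (m : ℤ) + 1 := ⟨(k - 1).toNat, by omega⟩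
    subst hm
    have h1 : ((m : ℤ) + 1).toNat = m + 1 := by omega
    have h2 : ((m : ℤ) + 1 - 1).toNat = m := by omega
    simp only [stirlingFst, if_pos (by omega : (0:ℤ) ≤ (m:ℤ) + 1),
      if_pos (by omega : (0:ℤ) ≤ (m:ℤ) + 1 - 1), h1, h2]
    rw [Finset.prod_range_succ, Polynomial.coeff_mul_X_sub_C]
    ring

lemma stirlingFst_one (q : ℕ) : stirlingFst (q + 1) 1 = (-1) ^ q * q.factorial := by
  induction q with
  | zero => simpa using stirlingFst_diag 1
  | succ q ih =>
    rw [stirlingFst_rec (q + 1) 1]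
    simp only [sub_self, stirlingFst_zero (by omega : 1 ≤ q + 1), ih]
    push_cast [Nat.factorial_succ]
    ring

/-- Key identity: b(q, v+1) = ∑_{p=0}^{v} (-1)^p C(v,p) (p+1) s(p+1, p-q+2). -/
lemma bII (q v : ℕ) :
    b q (v + 1) = ∑ p ∈ Finset.range (v + 1),
      (-1 : ℤ) ^ p * (v.choose p) * (p + 1) * stirlingFst (p + 1) ((p : ℤ) - q + 2) := by
  have key : b q (v + 1) = b q v
      - ∑ p ∈ Finset.range (v + 1),
        (-1 : ℤ) ^ p * (v.choose p) * stirlingFst (p + 2) ((p : ℤ) - q + 2) := by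
    have expand : b q (v + 1)
        = ∑ p ∈ Finset.range (v + 1),
            (-1 : ℤ) ^ (p + 1) * ((v + 1).choose (p + 1)) * stirlingFst (p + 2) ((p : ℤ) - q + 2)
          + (1 : ℤ) * ((v + 1).choose 0) * stirlingFst 1 ((0 : ℤ) - q + 1) := by
      rw [b, Finset.sum_range_succ']
      have hc : ∀ p ∈ Finset.range (v + 1),
          (-1 : ℤ) ^ (p + 1) * ((v + 1).choose (p + 1))
            * stirlingFst (p + 1 + 1) (((p + 1 : ℕ) : ℤ) - q + 1)
          = (-1 : ℤ) ^ (p + 1) * ((v + 1).choose (p + 1))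
            * stirlingFst (p + 2) ((p : ℤ) - q + 2) := by
        intro p _
        have e : ((p + 1 : ℕ) : ℤ) - q + 1 = (p : ℤ) - q + 2 := by push_cast; ring
        rw [show p + 1 + 1 = p + 2 from rfl, e]
      rw [Finset.sum_congr rfl hc]
      norm_num
    have shift : ∑ p ∈ Finset.range (v + 1),
          (-1 : ℤ) ^ p * (v.choose (p + 1)) * stirlingFst (p + 2) ((p : ℤ) - q + 2)
        = (1 : ℤ) * (v.choose 0) * stirlingFst 1 ((0 : ℤ) - q + 1) - b q v := by
      have h1 : ∑ p ∈ Finset.range (v + 2),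
          (-1 : ℤ) ^ p * (v.choose p) * stirlingFst (p + 1) ((p : ℤ) - q + 1) = b q v := by
        rw [Finset.sum_range_succ]
        simp [b, Nat.choose_succ_self]
      have h2 : ∑ p ∈ Finset.range (v + 2),
          (-1 : ℤ) ^ p * (v.choose p) * stirlingFst (p + 1) ((p : ℤ) - q + 1)
          = ∑ p ∈ Finset.range (v + 1),
              (-1 : ℤ) ^ (p + 1) * (v.choose (p + 1))
                * stirlingFst (p + 1 + 1) (((p + 1 : ℕ) : ℤ) - q + 1)
            + (1 : ℤ) * (v.choose 0) * stirlingFst 1 ((0 : ℤ) - q + 1) := by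
        rw [Finset.sum_range_succ']
        norm_num
      have h3 : ∑ p ∈ Finset.range (v + 1),
          (-1 : ℤ) ^ (p + 1) * (v.choose (p + 1))
            * stirlingFst (p + 1 + 1) (((p + 1 : ℕ) : ℤ) - q + 1)
          = - ∑ p ∈ Finset.range (v + 1),
              (-1 : ℤ) ^ p * (v.choose (p + 1)) * stirlingFst (p + 2) ((p : ℤ) - q + 2) := by
        rw [← Finset.sum_neg_distrib]
        refine Finset.sum_congr rfl fun p _ => ?_
        have e : ((p + 1 : ℕ) : ℤ) - q + 1 = (p : ℤ) - q + 2 := by push_cast; ring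
        rw [show p + 1 + 1 = p + 2 from rfl, e]
        ring
      rw [h2, h3] at h1
      linarith
    rw [expand]
    have split : ∀ p ∈ Finset.range (v + 1),
        (-1 : ℤ) ^ (p + 1) * ((v + 1).choose (p + 1)) * stirlingFst (p + 2) ((p : ℤ) - q + 2)
        = -((-1 : ℤ) ^ p * (v.choose p) * stirlingFst (p + 2) ((p : ℤ) - q + 2))
          + -((-1 : ℤ) ^ p * (v.choose (p + 1)) * stirlingFst (p + 2) ((p : ℤ) - q + 2)) := by
      intro p _
      rw [Nat.choose_succ_succ]
      push_cast
      ring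
    rw [Finset.sum_congr rfl split, Finset.sum_add_distrib, Finset.sum_neg_distrib,
      Finset.sum_neg_distrib, shift]
    have : (((v + 1).choose 0 : ℕ) : ℤ) = ((v.choose 0 : ℕ) : ℤ) := by norm_num
    rw [this]
    ring
  rw [key]
  have hrec : ∀ p ∈ Finset.range (v + 1),
      (-1 : ℤ) ^ p * (v.choose p) * stirlingFst (p + 2) ((p : ℤ) - q + 2)
      = (-1 : ℤ) ^ p * (v.choose p) * stirlingFst (p + 1) ((p : ℤ) - q + 1)
        - (-1 : ℤ) ^ p * (v.choose p) * (p + 1) * stirlingFst (p + 1) ((p : ℤ) - q + 2) := by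
    intro p _
    rw [show p + 2 = p + 1 + 1 from rfl, stirlingFst_rec (p + 1) ((p : ℤ) - q + 2)]
    have e : (p : ℤ) - q + 2 - 1 = (p : ℤ) - q + 1 := by ring
    rw [e]
    push_cast
    ring
  rw [Finset.sum_congr rfl hrec, Finset.sum_sub_distrib, ← b]
  ring

/-- Boundary values and recurrence for b(q,v). -/
theorem stmt10 :
    (∀ q v : ℕ, v < q → b q v = 0) ∧
    (∀ v : ℕ, 1 ≤ v → b 0 v = 0) ∧
    (∀ q : ℕ, b q q = q.factorial) ∧
    (∀ q v : ℕ, 1 ≤ q → 2 ≤ v →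
      b q v = v * b (q - 1) (v - 1) - (v - 1) * b (q - 1) (v - 2)) := by
  refine ⟨?_, ?_, ?_, ?_⟩
  · intro q v hvq
    refine Finset.sum_eq_zero fun p hp => ?_
    have hp' : p < v + 1 := Finset.mem_range.mp hp
    rw [stirlingFst_nonpos (by omega) (by omega : (p : ℤ) - q + 1 ≤ 0), mul_zero]
  · intro v hv
    have h : b 0 v = ∑ p ∈ Finset.range (v + 1), (-1 : ℤ) ^ p * (v.choose p) := by
      rw [b]
      refine Finset.sum_congr rfl fun p _ => ?_
      have e : (p : ℤ) - (0 : ℕ) + 1 = ((p + 1 : ℕ) : ℤ) := by push_cast; ring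
      rw [e, stirlingFst_diag, mul_one]
    rw [h, Int.alternating_sum_range_choose]
    simp [show v ≠ 0 by omega]
  · intro q
    rw [b, Finset.sum_range_succ]
    have hzero : ∑ p ∈ Finset.range q,
        (-1 : ℤ) ^ p * (q.choose p) * stirlingFst (p + 1) ((p : ℤ) - q + 1) = 0 := by
      refine Finset.sum_eq_zero fun p hp => ?_
      have hp' : p < q := Finset.mem_range.mp hp
      rw [stirlingFst_nonpos (by omega) (by omega : (p : ℤ) - q + 1 ≤ 0), mul_zero]
    rw [hzero, zero_add]
    have e : (q : ℤ) - q + 1 = 1 := by ring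
    rw [e, stirlingFst_one, Nat.choose_self]
    have h4 : ((-1 : ℤ) ^ q) * ((-1 : ℤ) ^ q) = 1 := by
      rw [← pow_add]
      exact Even.neg_one_pow ⟨q, rfl⟩
    push_cast
    linear_combination (q.factorial : ℤ) * h4
  · intro q v hq hv
    obtain ⟨q', rfl⟩ : ∃ q', q = q' + 1 := ⟨q - 1, by omega⟩
    obtain ⟨w, rfl⟩ : ∃ w, v = w + 2 := ⟨v - 2, by omega⟩
    simp only [Nat.add_sub_cancel, show w + 2 - 1 = w + 1 from rfl]
    have h1 : b (q' + 1) (w + 2) = ∑ p ∈ Finset.range (w + 2),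
        (-1 : ℤ) ^ p * ((w + 1).choose p) * (p + 1) * stirlingFst (p + 1) ((p : ℤ) - q' + 1) := by
      rw [bII (q' + 1) (w + 1)]
      refine Finset.sum_congr rfl fun p _ => ?_
      have e : (p : ℤ) - ((q' + 1 : ℕ) : ℤ) + 2 = (p : ℤ) - q' + 1 := by push_cast; ring
      rw [e]
    rw [h1]
    have split : ∀ p ∈ Finset.range (w + 2),
        (-1 : ℤ) ^ p * ((w + 1).choose p) * (p + 1) * stirlingFst (p + 1) ((p : ℤ) - q' + 1)
        = (w + 2 : ℤ) * ((-1 : ℤ) ^ p * ((w + 1).choose p) * stirlingFst (p + 1) ((p : ℤ) - q' + 1))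
          - (w + 1 : ℤ) * ((-1 : ℤ) ^ p * (w.choose p) * stirlingFst (p + 1) ((p : ℤ) - q' + 1)) := by
      intro p hp
      have hp' : p < w + 2 := Finset.mem_range.mp hp
      have hch : (w.choose p : ℤ) * (w + 1) = ((w + 1).choose p : ℤ) * ((w + 1 : ℕ) - p : ℕ) := by
        exact_mod_cast congrArg (Nat.cast : ℕ → ℤ) (Nat.choose_mul_succ_eq w p)
      have hcast : (((w + 1 : ℕ) - p : ℕ) : ℤ) = (w : ℤ) + 1 - p := by omega
      rw [hcast] at hch
      linear_combination ((-1 : ℤ) ^ p * stirlingFst (p + 1) ((p : ℤ) - q' + 1)) * hch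
    rw [Finset.sum_congr rfl split, Finset.sum_sub_distrib, ← Finset.mul_sum, ← Finset.mul_sum]
    have h2 : ∑ p ∈ Finset.range (w + 2),
        (-1 : ℤ) ^ p * ((w + 1).choose p) * stirlingFst (p + 1) ((p : ℤ) - q' + 1)
        = b q' (w + 1) := by rw [b]
    have h3 : ∑ p ∈ Finset.range (w + 2),
        (-1 : ℤ) ^ p * (w.choose p) * stirlingFst (p + 1) ((p : ℤ) - q' + 1)
        = b q' w := by
      rw [Finset.sum_range_succ]
      simp [b, Nat.choose_succ_self]
    rw [h2, h3]
    push_cast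
    ring
end

section
/- Let b(q,v) = ∑_{p=0}^{v} (−1)^p C(v,p) s(p+1, p−q+1), with s the signed Stirling numbers of the first kind. Then b(q,q+1) = −(q+1)! ∑_{k=2}^{q+1} 1/k for all q ≥ 1. -/
open Finset Polynomial

/-!
Only the terms p = q and p = q + 1 of b(q, q+1) survive, since s(p+1, j) = 0 for j ≤ 0. They
involve s(q+1, 1) = (-1)^q q! and s(q+2, 2) = (-1)^q (q+1)! H_{q+1}, both read off the recurrence
s(n+1, k+1) = s(n, k) - n s(n, k+1) coming from x(x-1)⋯(x-n) = x(x-1)⋯(x-n+1) · (x - n).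
-/

section descPochhammer

variable {R : Type*} [CommRing R]

theorem prod_range_X_sub_C_eq_descPochhammer (n : ℕ) :
    ∏ i ∈ range n, (X - C (i : R)) = descPochhammer R n := by
  induction n with
  | zero => simp
  | succ n ih => rw [prod_range_succ, ih, descPochhammer_succ_right, map_natCast]

theorem descPochhammer_coeff_zero {n : ℕ} (hn : n ≠ 0) : (descPochhammer R n).coeff 0 = 0 := by
  rw [coeff_zero_eq_eval_zero, descPochhammer_ne_zero_eval_zero R hn]

theorem descPochhammer_succ_coeff_succ (n k : ℕ) :
    (descPochhammer R (n + 1)).coeff (k + 1) =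
      (descPochhammer R n).coeff k - n * (descPochhammer R n).coeff (k + 1) := by
  rw [descPochhammer_succ_right, ← map_natCast C, coeff_mul_X_sub_C, mul_comm]

theorem descPochhammer_succ_coeff_one (n : ℕ) :
    (descPochhammer R (n + 1)).coeff 1 = (-1) ^ n * n.factorial := by
  induction n with
  | zero => simp
  | succ n ih =>
    rw [descPochhammer_succ_coeff_succ, descPochhammer_coeff_zero n.succ_ne_zero, ih,
      Nat.factorial_succ]
    push_cast
    ring

end descPochhammer

theorem descPochhammer_succ_coeff_two (n : ℕ) :
    ((descPochhammer ℤ (n + 1)).coeff 2 : ℚ) = (-1) ^ (n + 1) * n.factorial * harmonic n := by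
  induction n with
  | zero => simp [coeff_X]
  | succ n ih =>
    rw [descPochhammer_succ_coeff_succ, descPochhammer_succ_coeff_one]
    push_cast
    rw [ih, harmonic_succ, Nat.factorial_succ]
    push_cast
    field_simp
    ring

theorem stirlingFst_natCast (n k : ℕ) : stirlingFst n k = (descPochhammer ℤ n).coeff k := by
  rw [stirlingFst, if_pos (by positivity), prod_range_X_sub_C_eq_descPochhammer, Int.toNat_natCast]

theorem stirlingFst_of_nonpos {n : ℕ} (hn : n ≠ 0) {k : ℤ} (hk : k ≤ 0) :
    stirlingFst n k = 0 := by
  rcases hk.lt_or_eq with hk | rfl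
  · simp [stirlingFst, hk.not_ge]
  · simpa using (stirlingFst_natCast n 0).trans (descPochhammer_coeff_zero hn)

theorem stirlingFst_succ_one (n : ℕ) : stirlingFst (n + 1) 1 = (-1) ^ n * n.factorial := by
  exact_mod_cast (stirlingFst_natCast (n + 1) 1).trans (descPochhammer_succ_coeff_one n)

theorem stirlingFst_succ_two (n : ℕ) :
    (stirlingFst (n + 1) 2 : ℚ) = (-1) ^ (n + 1) * n.factorial * harmonic n := by
  rw [← descPochhammer_succ_coeff_two, ← stirlingFst_natCast, Nat.cast_ofNat]

theorem b_succ_self (q : ℕ) :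
    b q (q + 1) =
      (-1) ^ q * (q + 1) * stirlingFst (q + 1) 1 - (-1) ^ q * stirlingFst (q + 1 + 1) 2 := by
  have vanishing : ∀ p ∈ range q,
      (-1 : ℤ) ^ p * ((q + 1).choose p) * stirlingFst (p + 1) ((p : ℤ) - q + 1) = 0 := by
    intro p hp
    rw [stirlingFst_of_nonpos p.succ_ne_zero (by simp at hp; omega), mul_zero]
  rw [b, sum_range_succ, sum_range_succ, sum_eq_zero vanishing, Nat.choose_succ_self_right,
    Nat.choose_self]
  push_cast
  rw [show (q : ℤ) - q + 1 = 1 by ring, show (q : ℤ) + 1 - q + 1 = 2 by ring]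
  ring

theorem sum_Icc_two_one_div_eq_harmonic_sub_one (n : ℕ) :
    ∑ k ∈ Icc 2 (n + 1), (1 : ℚ) / k = harmonic (n + 1) - 1 := by
  rw [harmonic_eq_sum_Icc, ← insert_Icc_add_one_left_eq_Icc (a := 1) (by omega),
    sum_insert (by simp)]
  simp

theorem stmt12_general (q : ℕ) :
    (b q (q + 1) : ℚ) =
      -((q + 1).factorial : ℚ) * ∑ k ∈ Finset.Icc 2 (q + 1), (1 : ℚ) / (k : ℚ) := by
  have sign_sq : (-1 : ℚ) ^ q * (-1) ^ q = 1 := by rw [← mul_pow]; norm_num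
  rw [b_succ_self, sum_Icc_two_one_div_eq_harmonic_sub_one]
  push_cast [stirlingFst_succ_one, stirlingFst_succ_two, Nat.factorial_succ]
  linear_combination ((q + 1) * q.factorial * (1 - harmonic (q + 1)) : ℚ) * sign_sq

/-- b(q,q+1) = −(q+1)! ∑_{k=2}^{q+1} 1/k for q ≥ 1. -/
theorem stmt12 (q : ℕ) (hq : 1 ≤ q) :
    (b q (q + 1) : ℚ) =
      -((q + 1).factorial : ℚ) * ∑ k ∈ Finset.Icc 2 (q + 1), (1 : ℚ) / (k : ℚ) :=
  stmt12_general q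
end

section
/- Let H be the m×(2^m−1) parity-check matrix of the Hamming code (columns are all distinct nonzero vectors of F_2^m) with m ≥ 2. Then the number of stopping sets of H of size 3 equals (1/6)(5^m − 3·3^m + 2·2^m). -/
open Finset

namespace Stmt15Aux

abbrev β := ZMod 2 × ZMod 2 × ZMod 2

def ok (b : β) : Prop := b ≠ (1,0,0) ∧ b ≠ (0,1,0) ∧ b ≠ (0,0,1)

instance : DecidablePred ok := fun b => by unfold ok; infer_instance

lemma ok_zero1 : ∀ x y : ZMod 2, ok (0, x, y) → x = y := by decide
lemma ok_zero2 : ∀ x y : ZMod 2, ok (x, 0, y) → x = y := by decide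
lemma ok_zero3 : ∀ x y : ZMod 2, ok (x, y, 0) → x = y := by decide

lemma count_pointwise (m : ℕ) (q : β → Prop) [DecidablePred q] :
    (univ.filter fun t : (Fin m → ZMod 2) × (Fin m → ZMod 2) × (Fin m → ZMod 2) =>
      ∀ i, q (t.1 i, t.2.1 i, t.2.2 i)).card
      = (Fintype.card {b // q b}) ^ m := by
  rw [← Fintype.card_subtype]
  have e : {t : (Fin m → ZMod 2) × (Fin m → ZMod 2) × (Fin m → ZMod 2) //
      ∀ i, q (t.1 i, t.2.1 i, t.2.2 i)} ≃ (Fin m → {b // q b}) :=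
    { toFun := fun t i => ⟨(t.1.1 i, t.1.2.1 i, t.1.2.2 i), t.2 i⟩
      invFun := fun f => ⟨(fun i => (f i).1.1, fun i => (f i).1.2.1, fun i => (f i).1.2.2),
        fun i => by simpa using (f i).2⟩
      left_inv := fun t => rfl
      right_inv := fun f => rfl }
  rw [Fintype.card_congr e, Fintype.card_fun, Fintype.card_fin]

lemma filter_card_triple {n : ℕ} {a b c : Fin n} (hab : a ≠ b) (hac : a ≠ c) (hbc : b ≠ c)
    (p : Fin n → Prop) [DecidablePred p] :
    (({a,b,c} : Finset (Fin n)).filter p).card =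
      (if p a then 1 else 0) + (if p b then 1 else 0) + (if p c then 1 else 0) := by
  rw [Finset.card_filter]
  rw [Finset.sum_insert (by simp [hab, hac]), Finset.sum_insert (by simp [hbc]),
    Finset.sum_singleton]
  ring

lemma ok_iff (x y z : ZMod 2) :
    ((if x = 1 then (1:ℕ) else 0) + (if y = 1 then 1 else 0) + (if z = 1 then 1 else 0) ≠ 1)
      ↔ ok (x, y, z) := by revert x y z; decide

lemma stopping_iff {m n : ℕ} (H : Matrix (Fin m) (Fin n) (ZMod 2)) {a b c : Fin n}
    (hab : a ≠ b) (hac : a ≠ c) (hbc : b ≠ c) :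
    IsStoppingSet H {a,b,c} ↔ ∀ i, ok (H i a, H i b, H i c) := by
  unfold IsStoppingSet
  refine forall_congr' fun i => ?_
  rw [filter_card_triple hab hac hbc, ok_iff]

lemma good_count (m : ℕ) :
    (((univ : Finset ((Fin m → ZMod 2) × (Fin m → ZMod 2) × (Fin m → ZMod 2))).filter fun t =>
      (t.1 ≠ t.2.1 ∧ t.1 ≠ t.2.2 ∧ t.2.1 ≠ t.2.2) ∧ ∀ i, ok (t.1 i, t.2.1 i, t.2.2 i)).card : ℚ)
      = (5:ℚ)^m - 3*3^m + 2*2^m := by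
  set α := Fin m → ZMod 2
  set A := (univ : Finset (α × α × α)).filter
    (fun t => ∀ i, ok (t.1 i, t.2.1 i, t.2.2 i)) with hA
  set B1 := (univ : Finset (α × α × α)).filter
    (fun t => ∀ i, ok (t.1 i, t.2.1 i, t.2.2 i) ∧ t.1 i = t.2.1 i) with hB1
  set B2 := (univ : Finset (α × α × α)).filter
    (fun t => ∀ i, ok (t.1 i, t.2.1 i, t.2.2 i) ∧ t.1 i = t.2.2 i) with hB2
  set B3 := (univ : Finset (α × α × α)).filter
    (fun t => ∀ i, ok (t.1 i, t.2.1 i, t.2.2 i) ∧ t.2.1 i = t.2.2 i) with hB3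
  set E := (univ : Finset (α × α × α)).filter
    (fun t => ∀ i, ok (t.1 i, t.2.1 i, t.2.2 i) ∧ t.1 i = t.2.1 i ∧ t.1 i = t.2.2 i) with hE
  have cA : A.card = 5 ^ m := by
    rw [hA]
    exact (count_pointwise m ok).trans
      (by rw [show Fintype.card {b // ok b} = 5 from by decide])
  have cB1 : B1.card = 3 ^ m := by
    rw [hB1]
    exact (count_pointwise m (fun b => ok b ∧ b.1 = b.2.1)).trans
      (by rw [show Fintype.card {b : β // ok b ∧ b.1 = b.2.1} = 3 from by decide])
  have cB2 : B2.card = 3 ^ m := by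
    rw [hB2]
    exact (count_pointwise m (fun b => ok b ∧ b.1 = b.2.2)).trans
      (by rw [show Fintype.card {b : β // ok b ∧ b.1 = b.2.2} = 3 from by decide])
  have cB3 : B3.card = 3 ^ m := by
    rw [hB3]
    exact (count_pointwise m (fun b => ok b ∧ b.2.1 = b.2.2)).trans
      (by rw [show Fintype.card {b : β // ok b ∧ b.2.1 = b.2.2} = 3 from by decide])
  have cE : E.card = 2 ^ m := by
    rw [hE]
    exact (count_pointwise m (fun b => ok b ∧ b.1 = b.2.1 ∧ b.1 = b.2.2)).trans
      (by rw [show Fintype.card {b : β // ok b ∧ b.1 = b.2.1 ∧ b.1 = b.2.2} = 2 from by decide])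
  have memB1 : ∀ t, t ∈ B1 ↔ t ∈ A ∧ t.1 = t.2.1 := by
    intro t
    simp only [hB1, hA, mem_filter, mem_univ, true_and, forall_and]
    exact and_congr Iff.rfl funext_iff.symm
  have memB2 : ∀ t, t ∈ B2 ↔ t ∈ A ∧ t.1 = t.2.2 := by
    intro t
    simp only [hB2, hA, mem_filter, mem_univ, true_and, forall_and]
    exact and_congr Iff.rfl funext_iff.symm
  have memB3 : ∀ t, t ∈ B3 ↔ t ∈ A ∧ t.2.1 = t.2.2 := by
    intro t
    simp only [hB3, hA, mem_filter, mem_univ, true_and, forall_and]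
    exact and_congr Iff.rfl funext_iff.symm
  have memE : ∀ t, t ∈ E ↔ t ∈ A ∧ t.1 = t.2.1 ∧ t.1 = t.2.2 := by
    intro t
    simp only [hE, hA, mem_filter, mem_univ, true_and, forall_and]
    exact and_congr Iff.rfl (and_congr funext_iff.symm funext_iff.symm)
  have hI12 : B1 ∩ B2 = E := by
    ext t; simp only [mem_inter, memB1 t, memB2 t, memE t]; tauto
  have hI3 : (B1 ∪ B2) ∩ B3 = E := by
    ext t
    simp only [mem_inter, mem_union, memB1 t, memB2 t, memB3 t, memE t]
    constructor
    · rintro ⟨(⟨hA1, h12⟩ | ⟨hA1, h13⟩), ⟨-, h23⟩⟩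
      · exact ⟨hA1, h12, h12.trans h23⟩
      · exact ⟨hA1, h13.trans h23.symm, h13⟩
    · rintro ⟨hA1, h12, h13⟩
      exact ⟨Or.inl ⟨hA1, h12⟩, hA1, h12.symm.trans h13⟩
  have hGood : (univ : Finset (α × α × α)).filter (fun t =>
      (t.1 ≠ t.2.1 ∧ t.1 ≠ t.2.2 ∧ t.2.1 ≠ t.2.2) ∧ ∀ i, ok (t.1 i, t.2.1 i, t.2.2 i))
      = A.filter fun t => t.1 ≠ t.2.1 ∧ t.1 ≠ t.2.2 ∧ t.2.1 ≠ t.2.2 := by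
    ext t
    simp only [hA, mem_filter, mem_univ, true_and]
    tauto
  have hBad : (A.filter fun t => ¬(t.1 ≠ t.2.1 ∧ t.1 ≠ t.2.2 ∧ t.2.1 ≠ t.2.2))
      = (B1 ∪ B2) ∪ B3 := by
    ext t
    simp only [mem_filter, mem_union, memB1 t, memB2 t, memB3 t]
    tauto
  have hsplit : ((A.filter fun t => t.1 ≠ t.2.1 ∧ t.1 ≠ t.2.2 ∧ t.2.1 ≠ t.2.2).card : ℕ)
      + ((B1 ∪ B2) ∪ B3).card = A.card := by
    rw [← hBad]
    exact Finset.card_filter_add_card_filter_not _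
  have e1 : ((B1 ∪ B2).card : ℕ) + E.card = B1.card + B2.card := by
    rw [← hI12]; exact Finset.card_union_add_card_inter _ _
  have e2 : (((B1 ∪ B2) ∪ B3).card : ℕ) + E.card = (B1 ∪ B2).card + B3.card := by
    rw [← hI3]; exact Finset.card_union_add_card_inter _ _
  rw [hGood]
  have q0 := congrArg (Nat.cast : ℕ → ℚ) hsplit
  have q1 := congrArg (Nat.cast : ℕ → ℚ) e1
  have q2 := congrArg (Nat.cast : ℕ → ℚ) e2
  have qA := congrArg (Nat.cast : ℕ → ℚ) cA
  have qB1 := congrArg (Nat.cast : ℕ → ℚ) cB1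
  have qB2 := congrArg (Nat.cast : ℕ → ℚ) cB2
  have qB3 := congrArg (Nat.cast : ℕ → ℚ) cB3
  have qE := congrArg (Nat.cast : ℕ → ℚ) cE
  push_cast at q0 q1 q2 qA qB1 qB2 qB3 qE
  linarith

lemma col_surj {m : ℕ} (H : Matrix (Fin m) (Fin (2^m-1)) (ZMod 2))
    (hinj : Function.Injective (fun j : Fin (2^m-1) => fun i => H i j))
    (hnz : ∀ j, (fun i => H i j) ≠ (0 : Fin m → ZMod 2)) :
    ∀ v : Fin m → ZMod 2, v ≠ 0 → ∃ j, (fun i => H i j) = v := by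
  intro v hv
  let c' : Fin (2^m-1) → {v : Fin m → ZMod 2 // v ≠ 0} := fun j => ⟨fun i => H i j, hnz j⟩
  have hc' : Function.Injective c' := fun a b h =>
    hinj (by simpa [c'] using congrArg Subtype.val h)
  have hcard : Fintype.card {v : Fin m → ZMod 2 // v ≠ 0} = 2^m - 1 := by
    have : Fintype.card {v : Fin m → ZMod 2 // ¬ (v = 0)} =
        Fintype.card (Fin m → ZMod 2) - Fintype.card {v : Fin m → ZMod 2 // v = 0} :=
      Fintype.card_subtype_compl _
    simpa [Fintype.card_subtype_eq, Fintype.card_fun] using this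
  have hbij : Function.Bijective c' :=
    (Fintype.bijective_iff_injective_and_card c').mpr ⟨hc', by simp [hcard]⟩
  obtain ⟨j, hj⟩ := hbij.surjective ⟨v, hv⟩
  exact ⟨j, congrArg Subtype.val hj⟩

lemma triple_fiber {n : ℕ} {a b c : Fin n} (hab : a ≠ b) (hac : a ≠ c) (hbc : b ≠ c) :
    ((univ : Finset (Fin n × Fin n × Fin n)).filter fun t =>
        (t.1 ≠ t.2.1 ∧ t.1 ≠ t.2.2 ∧ t.2.1 ≠ t.2.2) ∧
        ({t.1, t.2.1, t.2.2} : Finset (Fin n)) = {a,b,c}).card = 6 := by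
  classical
  have hba := hab.symm; have hca := hac.symm; have hcb := hbc.symm
  have hset : ((univ : Finset (Fin n × Fin n × Fin n)).filter fun t =>
        (t.1 ≠ t.2.1 ∧ t.1 ≠ t.2.2 ∧ t.2.1 ≠ t.2.2) ∧
        ({t.1, t.2.1, t.2.2} : Finset (Fin n)) = {a,b,c})
      = {(a,b,c),(a,c,b),(b,a,c),(b,c,a),(c,a,b),(c,b,a)} := by
    ext ⟨x, y, z⟩
    simp only [mem_filter, mem_univ, true_and, mem_insert, mem_singleton, Prod.mk.injEq]
    constructor
    · rintro ⟨⟨hxy, hxz, hyz⟩, hs⟩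
      have hx : x = a ∨ x = b ∨ x = c := by
        have : x ∈ ({a,b,c} : Finset (Fin n)) := hs ▸ (by simp)
        simpa using this
      have hy : y = a ∨ y = b ∨ y = c := by
        have : y ∈ ({a,b,c} : Finset (Fin n)) := hs ▸ (by simp)
        simpa using this
      have hz : z = a ∨ z = b ∨ z = c := by
        have : z ∈ ({a,b,c} : Finset (Fin n)) := hs ▸ (by simp)
        simpa using this
      rcases hx with rfl | rfl | rfl <;> rcases hy with rfl | rfl | rfl <;>
        rcases hz with rfl | rfl | rfl <;> simp_all
    · have key : ∀ u v w : Fin n, u ≠ v → u ≠ w → v ≠ w →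
          ({u, v, w} : Finset (Fin n)) = {a,b,c} →
          ((u ≠ v ∧ u ≠ w ∧ v ≠ w) ∧ ({u, v, w} : Finset (Fin n)) = {a,b,c}) :=
        fun u v w h1 h2 h3 h4 => ⟨⟨h1, h2, h3⟩, h4⟩
      rintro (⟨rfl, rfl, rfl⟩ | ⟨rfl, rfl, rfl⟩ | ⟨rfl, rfl, rfl⟩ | ⟨rfl, rfl, rfl⟩ |
        ⟨rfl, rfl, rfl⟩ | ⟨rfl, rfl, rfl⟩)
      · exact key _ _ _ hab hac hbc rfl
      · refine key _ _ _ hac hab hcb (by ext w; simp; tauto)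
      · refine key _ _ _ hba hbc hac (by ext w; simp; tauto)
      · refine key _ _ _ hbc hba hca (by ext w; simp; tauto)
      · refine key _ _ _ hca hcb hab (by ext w; simp; tauto)
      · refine key _ _ _ hcb hca hba (by ext w; simp; tauto)
  rw [hset]
  rw [card_insert_of_notMem (by simp [Prod.ext_iff]; tauto),
      card_insert_of_notMem (by simp [Prod.ext_iff]; tauto),
      card_insert_of_notMem (by simp [Prod.ext_iff]; tauto),
      card_insert_of_notMem (by simp [Prod.ext_iff]; tauto),
      card_insert_of_notMem (by simp [Prod.ext_iff]; tauto),
      card_singleton]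

end Stmt15Aux

open Stmt15Aux in
/-- For the Hamming code parity-check matrix (m ≥ 2),
S_3 = (1/6)(5^m − 3·3^m + 2·2^m). -/
theorem stmt15 (m : ℕ) (hm : 2 ≤ m) (H : Matrix (Fin m) (Fin (2 ^ m - 1)) (ZMod 2))
    (hinj : Function.Injective (fun j : Fin (2 ^ m - 1) => fun i => H i j))
    (hnz : ∀ j, (fun i => H i j) ≠ (0 : Fin m → ZMod 2)) :
    (numStoppingSets H 3 : ℚ) =
      (1 / 6) * ((5 : ℚ) ^ m - 3 * 3 ^ m + 2 * 2 ^ m) := by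
  classical
  set SS := (univ : Finset (Finset (Fin (2^m-1)))).filter
    (fun S => IsStoppingSet H S ∧ S.card = 3) with hSS
  have hnum : numStoppingSets H 3 = SS.card := by
    rw [hSS]
    unfold numStoppingSets
    rw [Nat.card_eq_fintype_card]
    exact Fintype.card_subtype _
  set T := (univ : Finset (Fin (2^m-1) × Fin (2^m-1) × Fin (2^m-1))).filter
    (fun t => (t.1 ≠ t.2.1 ∧ t.1 ≠ t.2.2 ∧ t.2.1 ≠ t.2.2) ∧
      IsStoppingSet H {t.1, t.2.1, t.2.2}) with hT
  have hmaps : ∀ t ∈ T, ({t.1, t.2.1, t.2.2} : Finset (Fin (2^m-1))) ∈ SS := by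
    intro t ht
    rw [hT, mem_filter] at ht
    obtain ⟨-, ⟨h12, h13, h23⟩, hstop⟩ := ht
    rw [hSS, mem_filter]
    refine ⟨mem_univ _, hstop, ?_⟩
    rw [card_insert_of_notMem (by simp [h12, h13]),
      card_insert_of_notMem (by simp [h23]), card_singleton]
  have hcount : T.card
      = ∑ S ∈ SS, (T.filter fun t => ({t.1, t.2.1, t.2.2} : Finset _) = S).card :=
    Finset.card_eq_sum_card_fiberwise hmaps
  have hfib : ∀ S ∈ SS, (T.filter fun t => ({t.1, t.2.1, t.2.2} : Finset _) = S).card = 6 := by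
    intro S hS
    rw [hSS, mem_filter] at hS
    obtain ⟨-, hstop, hcard3⟩ := hS
    obtain ⟨a, b, c, hab, hac, hbc, rfl⟩ := Finset.card_eq_three.mp hcard3
    have heq : T.filter (fun t => ({t.1, t.2.1, t.2.2} : Finset _) = {a,b,c})
        = (univ.filter fun t => (t.1 ≠ t.2.1 ∧ t.1 ≠ t.2.2 ∧ t.2.1 ≠ t.2.2) ∧
            ({t.1, t.2.1, t.2.2} : Finset _) = {a,b,c}) := by
      ext t
      rw [hT]
      simp only [Finset.filter_filter, mem_filter, mem_univ, true_and]
      constructor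
      · rintro ⟨⟨hd, -⟩, hs⟩; exact ⟨hd, hs⟩
      · rintro ⟨hd, hs⟩; exact ⟨⟨hd, hs ▸ hstop⟩, hs⟩
    rw [heq, triple_fiber hab hac hbc]
  have h6 : T.card = 6 * SS.card := by
    rw [hcount, Finset.sum_congr rfl hfib, Finset.sum_const, smul_eq_mul, mul_comm]
  set G := ((univ : Finset ((Fin m → ZMod 2) × (Fin m → ZMod 2) × (Fin m → ZMod 2))).filter
    fun t => (t.1 ≠ t.2.1 ∧ t.1 ≠ t.2.2 ∧ t.2.1 ≠ t.2.2) ∧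
      ∀ i, ok (t.1 i, t.2.1 i, t.2.2 i)) with hG
  have hcolne : ∀ {a b : Fin (2^m-1)}, a ≠ b → (fun i => H i a) ≠ (fun i => H i b) :=
    fun hne h => hne (hinj h)
  have hTG : T.card = G.card := by
    apply Finset.card_bij
      (fun t _ => ((fun i => H i t.1), (fun i => H i t.2.1), (fun i => H i t.2.2)))
    · intro t ht
      rw [hT, mem_filter] at ht
      obtain ⟨-, ⟨h12, h13, h23⟩, hstop⟩ := ht
      rw [hG, mem_filter]
      exact ⟨mem_univ _, ⟨hcolne h12, hcolne h13, hcolne h23⟩,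
        fun i => (stopping_iff H h12 h13 h23).mp hstop i⟩
    · intro t1 ht1 t2 ht2 h
      have e1 := congrArg Prod.fst h
      have e2 := congrArg (fun p : _ × _ × _ => p.2.1) h
      have e3 := congrArg (fun p : _ × _ × _ => p.2.2) h
      exact Prod.ext_iff.mpr ⟨hinj e1, Prod.ext_iff.mpr ⟨hinj e2, hinj e3⟩⟩
    · intro v hv
      rw [hG, mem_filter] at hv
      obtain ⟨-, ⟨h12, h13, h23⟩, hok⟩ := hv
      have hnz1 : v.1 ≠ 0 := by
        intro h0
        apply h23
        funext i
        have hi := hok i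
        rw [h0] at hi
        exact ok_zero1 _ _ (by simpa using hi)
      have hnz2 : v.2.1 ≠ 0 := by
        intro h0
        apply h13
        funext i
        have hi := hok i
        rw [h0] at hi
        exact ok_zero2 _ _ (by simpa using hi)
      have hnz3 : v.2.2 ≠ 0 := by
        intro h0
        apply h12
        funext i
        have hi := hok i
        rw [h0] at hi
        exact ok_zero3 _ _ (by simpa using hi)
      obtain ⟨a, ha⟩ := col_surj H hinj hnz v.1 hnz1
      obtain ⟨b, hb⟩ := col_surj H hinj hnz v.2.1 hnz2
      obtain ⟨c, hc⟩ := col_surj H hinj hnz v.2.2 hnz3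
      have hab : a ≠ b := fun h => h12 (by rw [← ha, ← hb, h])
      have hac : a ≠ c := fun h => h13 (by rw [← ha, ← hc, h])
      have hbc : b ≠ c := fun h => h23 (by rw [← hb, ← hc, h])
      refine ⟨(a, b, c), ?_, ?_⟩
      · rw [hT, mem_filter]
        refine ⟨mem_univ _, ⟨hab, hac, hbc⟩, ?_⟩
        rw [stopping_iff H hab hac hbc]
        intro i
        have hi := hok i
        rw [← ha, ← hb, ← hc] at hi
        exact hi
      · rw [ha, hb, hc]
  have hGc : (G.card : ℚ) = (5:ℚ)^m - 3*3^m + 2*2^m := by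
    rw [hG]; exact good_count m
  have h6q : (6 : ℚ) * SS.card = G.card := by
    exact_mod_cast (h6.symm.trans hTG)
  rw [hnum]
  rw [hGc] at h6q
  linarith
end

section
/- Let H be the m×(2^m−1) parity-check matrix of the Hamming code (columns are all distinct nonzero vectors of F_2^m) with m ≥ 2. Then the number of stopping sets of H of size 4 equals (1/24)(12^m − 6·6^m − 4·5^m + 3·4^m + 20·3^m − 14·2^m). -/
/-!
Ordering a stopping set of size 4 gives 4! = 24 injective 4-tuples of columns of `H`. Since every
nonzero vector is a column of `H`, these tuples are the m × 4 matrices over 𝔽₂ with distinct nonzero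
columns all of whose rows have weight ≠ 1 (there are 12 such "stopping patterns").

Matrices of stopping patterns with distinct columns are counted by inclusion–exclusion over the sets
of column pairs forced to be equal. Forcing equalities constrains every row separately, so each term
is a pure power `N ^ m`, with `N` the number of stopping patterns obeying those equalities; summing
gives `12^m - 6·6^m + 3·4^m + 8·3^m - 6·2^m`. Distinct columns include at most one zero column, and
the same count with column `k` forced to vanish is `5^m - 3·3^m + 2·2^m` for each of the four `k`.
-/

open Finset

open Function

theorem card_filter_injective_image_eq {α : Type*} [Fintype α] [DecidableEq α] {l : ℕ}
    {T : Finset α} (hT : #T = l) :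
    #{g : Fin l → α | Injective g ∧ univ.image g = T} = l.factorial := by
  have hemb : Fintype.card (Fin l ↪ T) = l.factorial := by
    rw [Fintype.card_embedding_eq, Fintype.card_coe, hT, Fintype.card_fin, Nat.descFactorial_self]
  rw [← hemb, ← card_univ]
  symm
  refine card_bij (fun e _ k => (e k : α)) (fun e _ => ?_) (fun e _ e' _ h => ?_) fun g hg => ?_
  · have hinj : Injective fun k => (e k : α) := Subtype.val_injective.comp e.injective
    refine mem_filter.2 ⟨mem_univ _, hinj, eq_of_subset_of_card_le ?_ ?_⟩
    · exact image_subset_iff.2 fun k _ => (e k).2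
    · rw [card_image_of_injective _ hinj, hT, card_univ, Fintype.card_fin]
  · ext k
    exact congrFun h k
  · obtain ⟨hinj, himage⟩ := (mem_filter.1 hg).2
    have hmem k : g k ∈ T := himage ▸ mem_image_of_mem g (mem_univ k)
    exact ⟨⟨fun k => ⟨g k, hmem k⟩, fun a b h => hinj (congrArg Subtype.val h)⟩, mem_univ _, rfl⟩

theorem card_filter_injective_image_mem {α : Type*} [Fintype α] [DecidableEq α] {l : ℕ}
    (s : Finset (Finset α)) (hs : ∀ T ∈ s, #T = l) :
    #{g : Fin l → α | Injective g ∧ univ.image g ∈ s} = l.factorial * #s := by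
  rw [card_eq_sum_card_fiberwise (f := fun g => univ.image g) (t := s)
      fun g hg => (mem_filter.1 hg).2.2,
    sum_congr rfl fun T hT => ?_, sum_const, smul_eq_mul, mul_comm]
  rw [filter_filter, ← card_filter_injective_image_eq (hs T hT)]
  congr 1
  ext g
  simp only [mem_filter, mem_univ, true_and]
  constructor
  · rintro ⟨⟨hinj, -⟩, himage⟩; exact ⟨hinj, himage⟩
  · rintro ⟨hinj, rfl⟩; exact ⟨⟨hinj, hT⟩, rfl⟩

theorem card_filter_forall_mem_and_forall_not_forall {ι α γ : Type*} [Fintype ι] [DecidableEq ι]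
    [Fintype α] [DecidableEq α] (A : Finset α) (s : Finset γ) (P : γ → α → Prop)
    [∀ c, DecidablePred (P c)] :
    (#{f : ι → α | (∀ i, f i ∈ A) ∧ ∀ c ∈ s, ¬ ∀ i, P c (f i)} : ℤ) =
      ∑ t ∈ s.powerset, (-1) ^ #t * (#{a ∈ A | ∀ c ∈ t, P c a} : ℤ) ^ Fintype.card ι := by
  let S c : Finset (ι → α) := {f | ∀ i, P c (f i)}
  have hie := inclusion_exclusion_sum_inf_compl s S (fun f => if ∀ i, f i ∈ A then (1 : ℤ) else 0)
  simp only [sum_boole, smul_eq_mul] at hie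
  have hinf (t : Finset γ) : {f ∈ t.inf S | ∀ i, f i ∈ A} =
      Fintype.piFinset fun _ => {a ∈ A | ∀ c ∈ t, P c a} := by
    ext f
    simp only [S, mem_filter, mem_inf, mem_univ, true_and, Fintype.mem_piFinset, forall_and]
    refine and_comm.trans (and_congr_right' ?_)
    exact ⟨fun h i c hc => h c hc i, fun h c hc i => h i c hc⟩
  calc (#{f : ι → α | (∀ i, f i ∈ A) ∧ ∀ c ∈ s, ¬ ∀ i, P c (f i)} : ℤ)
      = #{f ∈ s.inf fun c => (S c)ᶜ | ∀ i, f i ∈ A} := by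
        congr 2
        ext f
        simp [S, mem_inf, and_comm]
    _ = _ := hie
    _ = _ := by
        refine sum_congr rfl fun t _ => ?_
        rw [hinf, Fintype.card_piFinset, prod_const, card_univ, Nat.cast_pow]

def ltPairs (l : ℕ) : Finset (Fin l × Fin l) := {q | q.1 < q.2}

theorem card_filter_forall_mem_and_injective_swap {β : Type*} [Fintype β] [DecidableEq β]
    {r l : ℕ} (A : Finset (Fin l → β)) :
    (#{f : Fin r → Fin l → β | (∀ i, f i ∈ A) ∧ Injective (swap f)} : ℤ) =
      ∑ t ∈ (ltPairs l).powerset,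
        (-1) ^ #t * (#{p ∈ A | ∀ q ∈ t, p q.1 = p q.2} : ℤ) ^ r := by
  calc (#{f : Fin r → Fin l → β | (∀ i, f i ∈ A) ∧ Injective (swap f)} : ℤ)
      = #{f : Fin r → Fin l → β | (∀ i, f i ∈ A) ∧
          ∀ q ∈ ltPairs l, ¬ ∀ i, f i q.1 = f i q.2} := by
        congr 2
        refine filter_congr fun f _ => and_congr_right' ?_
        rw [injective_iff_pairwise_ne, pairwise_iff_lt]
        simp only [ltPairs, mem_filter, mem_univ, true_and, Prod.forall, ne_eq, funext_iff]
    _ = _ := by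
        convert card_filter_forall_mem_and_forall_not_forall A _
          fun (q : Fin l × Fin l) p => p q.1 = p q.2
        rw [Fintype.card_fin]

theorem card_eq_card_filter_forall_ne_add_sum_card_filter_eq {σ β : Type*} {l : ℕ}
    [DecidableEq σ] [DecidableEq β] (X : Finset σ) (φ : σ → Fin l → β)
    (hφ : ∀ x ∈ X, Injective (φ x)) (b : β) :
    #X = #{x ∈ X | ∀ k, φ x k ≠ b} + ∑ k, #{x ∈ X | φ x k = b} := by
  have hdisj : (↑(univ : Finset (Fin l)) : Set (Fin l)).PairwiseDisjoint
      fun k => {x ∈ X | φ x k = b} := by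
    intro k _ k' _ hkk'
    refine disjoint_filter.2 fun x hx hk hk' => hkk' (hφ x hx (hk.trans hk'.symm))
  have hnot : {x ∈ X | ¬ ∀ k, φ x k ≠ b} = univ.biUnion fun k => {x ∈ X | φ x k = b} := by
    ext x
    simp
  rw [← card_biUnion hdisj, ← hnot, card_filter_add_card_filter_not]

theorem sum_mul_pow_eq_sum_range_fiberwise {σ : Type*} (s : Finset σ) (w : σ → ℤ) (N : σ → ℕ)
    {K : ℕ} (hN : ∀ t ∈ s, N t < K) (m : ℕ) :
    ∑ t ∈ s, w t * (N t : ℤ) ^ m = ∑ j ∈ range K, (∑ t ∈ s with N t = j, w t) * (j : ℤ) ^ m := by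
  rw [← sum_fiberwise_of_maps_to (fun t ht => mem_range.2 (hN t ht))]
  refine sum_congr rfl fun j _ => ?_
  rw [sum_mul]
  exact sum_congr rfl fun t ht => by rw [(mem_filter.1 ht).2]

instance {r n : ℕ} (H : Matrix (Fin r) (Fin n) (ZMod 2)) : DecidablePred (IsStoppingSet H) :=
  fun _ => inferInstanceAs (Decidable (∀ _, _))

theorem card_filter_injective_isStoppingSet {r n l : ℕ} (H : Matrix (Fin r) (Fin n) (ZMod 2)) :
    #{g : Fin l → Fin n | Injective g ∧ IsStoppingSet H (univ.image g)} =
      l.factorial * numStoppingSets H l := by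
  rw [numStoppingSets, Nat.card_eq_fintype_card, Fintype.card_subtype,
    ← card_filter_injective_image_mem _ fun T hT => (mem_filter.1 hT).2.2]
  refine congrArg card (filter_congr fun g _ => and_congr_right fun hg => ?_)
  simp [card_image_of_injective _ hg]

def stoppingPatterns (l : ℕ) : Finset (Fin l → ZMod 2) := {p | #{k | p k = 1} ≠ 1}

theorem isStoppingSet_image_iff {r n l : ℕ} (H : Matrix (Fin r) (Fin n) (ZMod 2))
    {g : Fin l → Fin n} (hg : Injective g) :
    IsStoppingSet H (univ.image g) ↔ ∀ i, (fun k => H i (g k)) ∈ stoppingPatterns l := by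
  simp only [IsStoppingSet, stoppingPatterns, mem_filter, mem_univ, true_and, filter_image,
    card_image_of_injective _ hg]

theorem exists_swap_eq_of_ne_zero {m : ℕ} {H : Matrix (Fin m) (Fin (2 ^ m - 1)) (ZMod 2)}
    (hinj : Injective (swap H)) (hnz : ∀ j, swap H j ≠ 0) {v : Fin m → ZMod 2} (hv : v ≠ 0) :
    ∃ j, swap H j = v := by
  let col : Fin (2 ^ m - 1) → {v : Fin m → ZMod 2 // v ≠ 0} := fun j => ⟨swap H j, hnz j⟩
  have hcol : Bijective col := by
    refine (Fintype.bijective_iff_injective_and_card col).2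
      ⟨fun j j' h => hinj (congrArg Subtype.val h), ?_⟩
    simp [Fintype.card_subtype_compl, Fintype.card_fin]
  obtain ⟨j, hj⟩ := hcol.2 ⟨v, hv⟩
  exact ⟨j, congrArg Subtype.val hj⟩

theorem card_filter_injective_isStoppingSet_eq_card_stoppingPatterns {r n l : ℕ}
    (H : Matrix (Fin r) (Fin n) (ZMod 2))
    (hinj : Injective (swap H)) (hnz : ∀ j, swap H j ≠ 0)
    (hsurj : ∀ v : Fin r → ZMod 2, v ≠ 0 → ∃ j, swap H j = v) :
    #{g : Fin l → Fin n | Injective g ∧ IsStoppingSet H (univ.image g)} =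
      #{f : Fin r → Fin l → ZMod 2 |
        (∀ i, f i ∈ stoppingPatterns l) ∧ Injective (swap f) ∧ ∀ k, swap f k ≠ 0} := by
  refine card_bij (fun g _ i k => H i (g k)) (fun g hg => ?_) (fun g _ g' _ h => ?_) fun f hf => ?_
  · obtain ⟨hg, hstop⟩ := (mem_filter.1 hg).2
    exact mem_filter.2 ⟨mem_univ _, (isStoppingSet_image_iff H hg).1 hstop,
      hinj.comp hg, fun k => hnz (g k)⟩
  · funext k
    exact hinj (funext fun i => congrFun (congrFun h i) k)
  · obtain ⟨hrows, hf, hnzf⟩ := (mem_filter.1 hf).2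
    choose g hg using fun k => hsurj _ (hnzf k)
    have hfg : (fun i k => H i (g k)) = f := funext fun i => funext fun k => congrFun (hg k) i
    have hginj : Injective g := fun k k' h => hf (by rw [← hg k, ← hg k', h])
    refine ⟨g, mem_filter.2 ⟨mem_univ _, hginj, (isStoppingSet_image_iff H hginj).2 ?_⟩, hfg⟩
    simpa only [← hfg] using hrows

theorem sum_powerset_stoppingPatterns (m : ℕ) :
    ∑ t ∈ (ltPairs 4).powerset,
        (-1) ^ #t * (#{p ∈ stoppingPatterns 4 | ∀ q ∈ t, p q.1 = p q.2} : ℤ) ^ m =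
      12 ^ m - 6 * 6 ^ m + 3 * 4 ^ m + 8 * 3 ^ m - 6 * 2 ^ m := by
  have hcoeff : ∀ j ∈ range 13, ∑ t ∈ (ltPairs 4).powerset with
      #{p ∈ stoppingPatterns 4 | ∀ q ∈ t, p q.1 = p q.2} = j, (-1 : ℤ) ^ #t =
      [0, 0, -6, 8, 3, 0, -6, 0, 0, 0, 0, 0, 1].getD j 0 := by
    decide
  rw [sum_mul_pow_eq_sum_range_fiberwise _ _ _ (K := 13)
      (fun t _ => (card_filter_le _ _).trans_lt (by decide)),
    sum_congr rfl fun j hj => by rw [hcoeff j hj]]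
  norm_num [sum_range_succ]
  ring

theorem sum_powerset_stoppingPatterns_zero (m : ℕ) (k : Fin 4) :
    ∑ t ∈ (ltPairs 4).powerset,
        (-1) ^ #t * (#{p ∈ {p ∈ stoppingPatterns 4 | p k = 0} | ∀ q ∈ t, p q.1 = p q.2} : ℤ) ^ m =
      5 ^ m - 3 * 3 ^ m + 2 * 2 ^ m := by
  have hcoeff : ∀ k : Fin 4, ∀ j ∈ range 13,
      ∑ t ∈ (ltPairs 4).powerset with
        #{p ∈ {p ∈ stoppingPatterns 4 | p k = 0} | ∀ q ∈ t, p q.1 = p q.2} = j, (-1 : ℤ) ^ #t =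
      [0, 0, 2, -3, 0, 1, 0, 0, 0, 0, 0, 0, 0].getD j 0 := by
    decide
  rw [sum_mul_pow_eq_sum_range_fiberwise _ _ _ (K := 13)
      (fun t _ => (card_filter_le _ _).trans_lt ((card_filter_le _ _).trans_lt (by decide))),
    sum_congr rfl fun j hj => by rw [hcoeff k j hj]]
  norm_num [sum_range_succ]
  ring

theorem card_filter_stoppingPatterns_injective_ne_zero (m : ℕ) :
    (#{f : Fin m → Fin 4 → ZMod 2 |
      (∀ i, f i ∈ stoppingPatterns 4) ∧ Injective (swap f) ∧ ∀ k, swap f k ≠ 0} : ℤ) =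
      12 ^ m - 6 * 6 ^ m - 4 * 5 ^ m + 3 * 4 ^ m + 20 * 3 ^ m - 14 * 2 ^ m := by
  set X : Finset (Fin m → Fin 4 → ZMod 2) :=
    {f | (∀ i, f i ∈ stoppingPatterns 4) ∧ Injective (swap f)} with hX_def
  have hsplit := card_eq_card_filter_forall_ne_add_sum_card_filter_eq X swap
    (fun f hf => (mem_filter.1 hf).2.2) 0
  have hX : (#X : ℤ) = 12 ^ m - 6 * 6 ^ m + 3 * 4 ^ m + 8 * 3 ^ m - 6 * 2 ^ m := by
    rw [card_filter_forall_mem_and_injective_swap, sum_powerset_stoppingPatterns]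
  have hzero (k : Fin 4) : (#{f ∈ X | swap f k = 0} : ℤ) = 5 ^ m - 3 * 3 ^ m + 2 * 2 ^ m := by
    rw [← sum_powerset_stoppingPatterns_zero m k, ← card_filter_forall_mem_and_injective_swap,
      hX_def, filter_filter]
    congr 2
    ext f
    simp only [funext_iff, swap, Pi.zero_apply, mem_filter, mem_univ, true_and, forall_and]
    tauto
  have hne : #{f ∈ X | ∀ k, swap f k ≠ 0} = #{f : Fin m → Fin 4 → ZMod 2 |
      (∀ i, f i ∈ stoppingPatterns 4) ∧ Injective (swap f) ∧ ∀ k, swap f k ≠ 0} := by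
    rw [hX_def, filter_filter]
    simp only [and_assoc]
  have hsplitℤ := congrArg (Nat.cast : ℕ → ℤ) hsplit
  push_cast [sum_congr rfl fun k _ => hzero k, hX, sum_const, card_univ, Fintype.card_fin,
    nsmul_eq_mul] at hsplitℤ
  rw [← hne]
  linarith

theorem stmt16_general (m : ℕ) (H : Matrix (Fin m) (Fin (2 ^ m - 1)) (ZMod 2))
    (hinj : Function.Injective (fun j : Fin (2 ^ m - 1) => fun i => H i j))
    (hnz : ∀ j, (fun i => H i j) ≠ (0 : Fin m → ZMod 2)) :
    (numStoppingSets H 4 : ℚ) =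
      (1 / 24) * ((12 : ℚ) ^ m - 6 * 6 ^ m - 4 * 5 ^ m + 3 * 4 ^ m + 20 * 3 ^ m - 14 * 2 ^ m) := by
  have h24 := card_filter_injective_isStoppingSet H (l := 4)
  rw [card_filter_injective_isStoppingSet_eq_card_stoppingPatterns H hinj hnz
    fun v hv => exists_swap_eq_of_ne_zero hinj hnz hv] at h24
  have h := card_filter_stoppingPatterns_injective_ne_zero m
  rw [h24] at h
  have hℚ := congrArg (Int.cast : ℤ → ℚ) h
  push_cast [Nat.factorial] at hℚ
  linarith

/-- For the Hamming code parity-check matrix (m ≥ 2),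
S_4 = (1/24)(12^m − 6·6^m − 4·5^m + 3·4^m + 20·3^m − 14·2^m). -/
theorem stmt16 (m : ℕ) (hm : 2 ≤ m) (H : Matrix (Fin m) (Fin (2 ^ m - 1)) (ZMod 2))
    (hinj : Function.Injective (fun j : Fin (2 ^ m - 1) => fun i => H i j))
    (hnz : ∀ j, (fun i => H i j) ≠ (0 : Fin m → ZMod 2)) :
    (numStoppingSets H 4 : ℚ) =
      (1 / 24) * ((12 : ℚ) ^ m - 6 * 6 ^ m - 4 * 5 ^ m + 3 * 4 ^ m + 20 * 3 ^ m - 14 * 2 ^ m) :=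
  stmt16_general m H hinj hnz
end

section
/- For fixed l ≥ 2 and all m ≥ 1, the number S_l of stopping sets of size l of the m×(2^m−1) full-rank parity-check matrix of the Hamming code satisfies (2^l − l)^m − (l + C(l,2))·2^{(l−1)m} ≤ l!·S_l ≤ (2^l − l)^m. Consequently, for fixed l ≥ 3, l!·S_l / (2^l − l)^m → 1 as m → ∞. -/
/-!
Listing the elements of a stopping set in some order turns the `l! · S_l` ordered stopping sets
into the `m × l` matrices with distinct nonzero columns and no row of weight one, because the
columns of `H` are exactly the nonzero vectors of `𝔽₂^m`. Without the conditions on the columns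
there are `(2^l - l)^m` such matrices, one factor `2^l - l` per row. A matrix with a zero column,
or with two equal columns, is determined by `l - 1` of its columns, so each of the `l + C(l, 2)`
ways of failing the column conditions excludes at most `2^((l-1)m)` matrices. For `l ≥ 3` this
error term is `o((2^l - l)^m)` since `2^(l-1) < 2^l - l`.
-/

open Finset

open scoped Nat Matrix

section Embeddings

variable {α : Type*} [Fintype α] [DecidableEq α] {l : ℕ}

theorem card_filter_map_univ_eq (S : Finset α) (hS : #S = l) :
    #{f : Fin l ↪ α | univ.map f = S} = l ! := by
  have hcard : Fintype.card (Fin l ↪ S) = l ! := by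
    rw [Fintype.card_embedding_eq, Fintype.card_fin, Fintype.card_coe, hS, Nat.descFactorial_self]
  rw [← hcard, ← Finset.card_univ]
  symm
  refine card_bij (fun g _ => g.trans (Function.Embedding.subtype _)) (fun g _ => ?_)
    (fun g _ g' _ h => ?_) (fun f hf => ?_)
  · refine mem_filter.mpr ⟨mem_univ _, eq_of_subset_of_card_le ?_ ?_⟩
    · intro x hx
      obtain ⟨j, -, rfl⟩ := mem_map.mp hx
      exact (g j).2
    · rw [card_map, Finset.card_univ, Fintype.card_fin, hS]
  · ext j
    exact DFunLike.congr_fun h j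
  · have hmem : ∀ j, f j ∈ S := fun j => (mem_filter.mp hf).2 ▸ mem_map_of_mem f (mem_univ j)
    exact ⟨f.codRestrict (S : Set α) hmem, mem_univ _, rfl⟩

theorem factorial_mul_card_filter_card_eq (P : Finset α → Prop) [DecidablePred P] :
    l ! * #{S : Finset α | P S ∧ #S = l} = #{f : Fin l ↪ α | P (univ.map f)} := by
  have hmaps : Set.MapsTo (fun f : Fin l ↪ α => univ.map f)
      ({f : Fin l ↪ α | P (univ.map f)} : Finset _)
      ({S : Finset α | P S ∧ #S = l} : Finset _) := by
    intro f hf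
    simp_all
  rw [card_eq_sum_card_fiberwise hmaps, sum_const_nat fun S hS => ?_, mul_comm]
  rw [mem_filter] at hS
  rw [filter_filter, ← card_filter_map_univ_eq S hS.2.2]
  congr 1
  exact filter_congr fun f _ => ⟨And.right, fun h => ⟨h ▸ hS.2.1, h⟩⟩

end Embeddings

section Columns

variable {ι κ : Type*} [Fintype ι]

/-- `c j` is the `j`-th column of a `κ × ι` matrix over `𝔽₂`. -/
def NoRowOfWeightOne (c : ι → κ → ZMod 2) : Prop :=
  ∀ i, #{j | c j i = 1} ≠ 1

instance [Fintype κ] : DecidablePred (NoRowOfWeightOne (ι := ι) (κ := κ)) :=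
  fun _ => inferInstanceAs (Decidable (∀ _, _))

def piZModTwoEquivFinset [DecidableEq ι] : (ι → ZMod 2) ≃ Finset ι where
  toFun v := {j | v j = 1}
  invFun s j := if j ∈ s then 1 else 0
  left_inv v := funext fun j => by
    have : ∀ x : ZMod 2, (if x = 1 then 1 else 0) = x := by decide
    simpa using this (v j)
  right_inv s := by ext; simp

theorem card_finset_card_ne_one :
    Fintype.card {s : Finset ι // #s ≠ 1} = 2 ^ Fintype.card ι - Fintype.card ι := by
  rw [Fintype.card_subtype_compl, Fintype.card_finset_len, Fintype.card_finset,
    Nat.choose_one_right]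

theorem card_noRowOfWeightOne [DecidableEq ι] [Fintype κ] [DecidableEq κ] :
    #{c : ι → κ → ZMod 2 | NoRowOfWeightOne c}
      = (2 ^ Fintype.card ι - Fintype.card ι) ^ Fintype.card κ := by
  rw [← Fintype.card_subtype, ← card_finset_card_ne_one, ← Fintype.card_fun]
  calc Fintype.card {c : ι → κ → ZMod 2 // NoRowOfWeightOne c}
      = Fintype.card {M : κ → ι → ZMod 2 // ∀ i, #{j | M i j = 1} ≠ 1} :=
        Fintype.card_congr ((Equiv.piComm _).subtypeEquiv fun _ => Iff.rfl)
    _ = Fintype.card (κ → {v : ι → ZMod 2 // #{j | v j = 1} ≠ 1}) :=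
        Fintype.card_congr <|
          Equiv.subtypePiEquivPi (p := fun _ (v : ι → ZMod 2) => #{j | v j = 1} ≠ 1)
    _ = Fintype.card (κ → {s : Finset ι // #s ≠ 1}) :=
        Fintype.card_congr <| Equiv.piCongrRight fun _ =>
          piZModTwoEquivFinset.subtypeEquiv fun _ => Iff.rfl

end Columns

theorem isStoppingSet_map_iff {ι : Type*} [Fintype ι] {r n : ℕ}
    (H : Matrix (Fin r) (Fin n) (ZMod 2)) (f : ι ↪ Fin n) :
    IsStoppingSet H (univ.map f) ↔ NoRowOfWeightOne (Hᵀ ∘ f) := by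
  simp only [IsStoppingSet, NoRowOfWeightOne, filter_map, card_map]
  rfl

theorem factorial_mul_numStoppingSets {r n : ℕ} (H : Matrix (Fin r) (Fin n) (ZMod 2)) (l : ℕ) :
    l ! * numStoppingSets H l = #{f : Fin l ↪ Fin n | NoRowOfWeightOne (Hᵀ ∘ f)} := by
  classical
  rw [numStoppingSets, Nat.card_eq_fintype_card, Fintype.card_subtype,
    factorial_mul_card_filter_card_eq]
  exact congrArg card (filter_congr fun f _ => isStoppingSet_map_iff H f)

section Families

variable {ι V : Type*} [Fintype ι] [Fintype V]

theorem card_filter_embedding_le_card_filter [DecidableEq ι] (Q : (ι ↪ V) → Prop)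
    (P : (ι → V) → Prop) [DecidablePred Q] [DecidablePred P] :
    #{c : ι ↪ V | Q c ∧ P c} ≤ #{c : ι → V | P c} :=
  card_le_card_of_injOn (⇑) (fun c hc => by simp_all) fun _ _ _ _ h => DFunLike.coe_injective h

variable [DecidableEq V]

theorem card_filter_apply_eq_le [DecidableEq ι] (k : ι) (g : ({i // i ≠ k} → V) → V) :
    #{c : ι → V | c k = g (fun i => c i)} ≤ Fintype.card V ^ (Fintype.card ι - 1) := by
  calc #{c : ι → V | c k = g (fun i => c i)}
      ≤ #(univ : Finset ({i // i ≠ k} → V)) := by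
        refine card_le_card_of_injOn (fun c i => c i) (fun _ _ => mem_univ _)
          fun c hc c' hc' h => ?_
        simp only [coe_filter, mem_univ, true_and, Set.mem_ofPred_eq] at hc hc'
        funext i
        by_cases hik : i = k
        · subst hik
          exact hc.trans (hc'.trans (congrArg g h).symm).symm
        · exact congrFun h ⟨i, hik⟩
    _ = Fintype.card V ^ (Fintype.card ι - 1) := by
        rw [Finset.card_univ, Fintype.card_fun, Fintype.card_subtype_compl, Fintype.card_subtype_eq]

theorem card_filter_not_injective_or_exists_eq_le [LinearOrder ι] (v : V) :
    #{c : ι → V | ¬Function.Injective c ∨ ∃ j, c j = v}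
      ≤ ((Fintype.card ι).choose 2 + Fintype.card ι) *
          Fintype.card V ^ (Fintype.card ι - 1) := by
  set X := Fintype.card V ^ (Fintype.card ι - 1)
  have hcover : ({c : ι → V | ¬Function.Injective c ∨ ∃ j, c j = v} : Finset _)
      ⊆ ({p : ι × ι | p.1 < p.2} : Finset _).biUnion (fun p => {c : ι → V | c p.2 = c p.1})
        ∪ univ.biUnion (fun j => {c : ι → V | c j = v}) := by
    intro c hc
    simp only [mem_filter, mem_univ, true_and] at hc
    simp only [mem_union, mem_biUnion, mem_filter, mem_univ, true_and]
    rcases hc with hc | ⟨j, hj⟩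
    · obtain ⟨a, b, hab, hne⟩ := Function.not_injective_iff.mp hc
      rcases hne.lt_or_gt with h | h
      · exact Or.inl ⟨(a, b), h, hab.symm⟩
      · exact Or.inl ⟨(b, a), h, hab⟩
    · exact Or.inr ⟨j, hj⟩
  calc _ ≤ _ := card_le_card hcover
    _ ≤ (Fintype.card ι).choose 2 * X + Fintype.card ι * X := by
        refine (card_union_le _ _).trans (Nat.add_le_add ?_ ?_)
        · rw [← Fintype.card_product_filter_lt]
          exact card_biUnion_le_card_mul _ _ _ fun p hp =>
            card_filter_apply_eq_le p.2 fun r => r ⟨p.1, (mem_filter.mp hp).2.ne⟩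
        · rw [← Finset.card_univ]
          exact card_biUnion_le_card_mul _ _ _ fun j _ => card_filter_apply_eq_le j fun _ => v
    _ = _ := (add_mul _ _ _).symm

theorem card_filter_le_card_filter_embedding_add [LinearOrder ι] (v : V) (P : (ι → V) → Prop)
    [DecidablePred P] :
    #{c : ι → V | P c} ≤ #{c : ι ↪ V | (∀ j, c j ≠ v) ∧ P c}
      + ((Fintype.card ι).choose 2 + Fintype.card ι) *
          Fintype.card V ^ (Fintype.card ι - 1) := by
  have hcover : ({c : ι → V | P c} : Finset _) ⊆
      ({c : ι ↪ V | (∀ j, c j ≠ v) ∧ P c} : Finset _).image (⇑)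
        ∪ ({c : ι → V | ¬Function.Injective c ∨ ∃ j, c j = v} : Finset _) := by
    intro c hc
    simp only [mem_filter, mem_univ, true_and] at hc
    by_cases hgood : Function.Injective c ∧ ∀ j, c j ≠ v
    · exact mem_union_left _ (mem_image.mpr ⟨⟨c, hgood.1⟩, by simp [hgood.2, hc], rfl⟩)
    · refine mem_union_right _ (mem_filter.mpr ⟨mem_univ _, ?_⟩)
      simpa only [not_and_or, not_forall, not_not] using hgood
  calc _ ≤ _ := card_le_card hcover
    _ ≤ _ := (card_union_le _ _).trans <|
      Nat.add_le_add card_image_le (card_filter_not_injective_or_exists_eq_le v)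

end Families

theorem card_filter_embedding_trans {ι β γ : Type*} [Fintype ι] [DecidableEq ι] [Fintype β]
    [DecidableEq β] [Fintype γ] [DecidableEq γ] (g : β ↪ γ) (P : (ι → γ) → Prop)
    [DecidablePred P] [DecidablePred (· ∈ Set.range g)] :
    #{f : ι ↪ β | P (g ∘ f)} = #{c : ι ↪ γ | (∀ j, c j ∈ Set.range g) ∧ P c} := by
  refine card_bij (fun f _ => f.trans g) (fun f hf => ?_) (fun f _ f' _ h => ?_) (fun c hc => ?_)
  · exact mem_filter.mpr ⟨mem_univ _, fun j => ⟨f j, rfl⟩, (mem_filter.mp hf).2⟩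
  · ext j
    exact g.injective (DFunLike.congr_fun h j)
  · simp only [mem_filter, mem_univ, true_and] at hc
    choose f hf using hc.1
    have hfinj : Function.Injective f := fun a b hab => c.injective <| by rw [← hf, ← hf, hab]
    refine ⟨⟨f, hfinj⟩, ?_, ?_⟩
    · simpa [Function.comp_def, hf] using hc.2
    · ext j
      exact hf j

section Hamming

variable {m : ℕ} {H : Matrix (Fin m) (Fin (2 ^ m - 1)) (ZMod 2)}

theorem mem_range_transpose_iff (hinj : Function.Injective Hᵀ) (hnz : ∀ j, Hᵀ j ≠ 0)
    (v : Fin m → ZMod 2) : v ∈ Set.range Hᵀ ↔ v ≠ 0 := by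
  let col : Fin (2 ^ m - 1) → {v : Fin m → ZMod 2 // v ≠ 0} := fun j => ⟨Hᵀ j, hnz j⟩
  have hcol : Function.Bijective col := by
    refine (Fintype.bijective_iff_injective_and_card col).mpr
      ⟨fun a b hab => hinj (congrArg Subtype.val hab), ?_⟩
    rw [Fintype.card_fin, Fintype.card_subtype_compl, Fintype.card_subtype_eq, Fintype.card_fun,
      ZMod.card, Fintype.card_fin]
  refine ⟨?_, fun hv => ?_⟩
  · rintro ⟨j, rfl⟩
    exact hnz j
  · obtain ⟨j, hj⟩ := hcol.2 ⟨v, hv⟩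
    exact ⟨j, congrArg Subtype.val hj⟩

theorem factorial_mul_numStoppingSets_eq_card (hinj : Function.Injective Hᵀ)
    (hnz : ∀ j, Hᵀ j ≠ 0) (l : ℕ) :
    l ! * numStoppingSets H l
      = #{c : Fin l ↪ (Fin m → ZMod 2) | (∀ j, c j ≠ 0) ∧ NoRowOfWeightOne c} := by
  classical
  let col : Fin (2 ^ m - 1) ↪ (Fin m → ZMod 2) := ⟨Hᵀ, hinj⟩
  calc l ! * numStoppingSets H l = #{f : Fin l ↪ _ | NoRowOfWeightOne (col ∘ f)} :=
        factorial_mul_numStoppingSets H l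
    _ = #{c : Fin l ↪ _ | (∀ j, c j ∈ Set.range col) ∧ NoRowOfWeightOne c} := by
        convert card_filter_embedding_trans (ι := Fin l) col NoRowOfWeightOne
    _ = _ := congrArg card <| filter_congr fun c _ =>
        and_congr_left' <| forall_congr' fun j => mem_range_transpose_iff hinj hnz (c j)

theorem factorial_mul_numStoppingSets_le (hinj : Function.Injective Hᵀ)
    (hnz : ∀ j, Hᵀ j ≠ 0) (l : ℕ) :
    l ! * numStoppingSets H l ≤ (2 ^ l - l) ^ m := by
  rw [factorial_mul_numStoppingSets_eq_card hinj hnz]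
  have := card_filter_embedding_le_card_filter (ι := Fin l) (V := Fin m → ZMod 2)
    (fun c => ∀ j, c j ≠ 0) NoRowOfWeightOne
  rw [card_noRowOfWeightOne] at this
  simpa using this

theorem le_factorial_mul_numStoppingSets_add (hinj : Function.Injective Hᵀ)
    (hnz : ∀ j, Hᵀ j ≠ 0) (l : ℕ) :
    (2 ^ l - l) ^ m ≤ l ! * numStoppingSets H l + (l + l.choose 2) * 2 ^ ((l - 1) * m) := by
  rw [factorial_mul_numStoppingSets_eq_card hinj hnz]
  have := card_filter_le_card_filter_embedding_add (ι := Fin l) (0 : Fin m → ZMod 2)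
    NoRowOfWeightOne
  rw [card_noRowOfWeightOne] at this
  simpa [add_comm, pow_mul'] using this

end Hamming

open Filter Topology in
theorem tendsto_div_pow_of_sub_le_of_le {x : ℕ → ℝ} {a b C : ℝ} (ha : 0 ≤ a) (hab : a < b)
    (hlow : ∀ m, b ^ m - C * a ^ m ≤ x m) (hup : ∀ m, x m ≤ b ^ m) :
    Tendsto (fun m => x m / b ^ m) atTop (𝓝 1) := by
  have hb : 0 < b := ha.trans_lt hab
  have hlim : Tendsto (fun m : ℕ => 1 - C * (a / b) ^ m) atTop (𝓝 1) := by
    have hr : Tendsto (fun m : ℕ => (a / b) ^ m) atTop (𝓝 0) :=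
      tendsto_pow_atTop_nhds_zero_of_lt_one (div_nonneg ha hb.le) ((div_lt_one hb).mpr hab)
    simpa using tendsto_const_nhds.sub (hr.const_mul C)
  refine tendsto_of_tendsto_of_tendsto_of_le_of_le hlim tendsto_const_nhds (fun m => ?_) fun m =>
    (div_le_one (pow_pos hb m)).mpr (hup m)
  rw [le_div_iff₀ (pow_pos hb m), sub_mul, div_pow, mul_assoc,
    div_mul_cancel₀ _ (pow_pos hb m).ne']
  simpa using hlow m

theorem two_pow_sub_one_add_lt_two_pow {l : ℕ} (hl : 3 ≤ l) : 2 ^ (l - 1) + l < 2 ^ l := by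
  obtain ⟨k, rfl⟩ := Nat.exists_eq_add_of_le' hl
  have := k.lt_two_pow_self
  rw [show k + 3 - 1 = k + 2 by omega, show 2 ^ (k + 2) = 4 * 2 ^ k by ring,
    show 2 ^ (k + 3) = 8 * 2 ^ k by ring]
  omega

theorem stmt17_general (l : ℕ)
    (H : ∀ m : ℕ, Matrix (Fin m) (Fin (2 ^ m - 1)) (ZMod 2))
    (hinj : ∀ m, Function.Injective (fun j : Fin (2 ^ m - 1) => fun i => H m i j))
    (hnz : ∀ m, ∀ j, (fun i => H m i j) ≠ (0 : Fin m → ZMod 2)) :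
    (∀ m : ℕ, 1 ≤ m →
      ((2 : ℤ) ^ l - l) ^ m - (l + l.choose 2) * 2 ^ ((l - 1) * m) ≤
          (l.factorial : ℤ) * numStoppingSets (H m) l ∧
        (l.factorial : ℤ) * numStoppingSets (H m) l ≤ ((2 : ℤ) ^ l - l) ^ m) ∧
    (3 ≤ l →
      Filter.Tendsto
        (fun m : ℕ => (l.factorial * numStoppingSets (H m) l : ℝ) / ((2 : ℝ) ^ l - l) ^ m)
        Filter.atTop (nhds 1)) := by
  have hl : l ≤ 2 ^ l := l.lt_two_pow_self.le
  have hbounds m : ((2 : ℤ) ^ l - l) ^ m - (l + l.choose 2) * 2 ^ ((l - 1) * m) ≤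
        (l ! : ℤ) * numStoppingSets (H m) l ∧
      (l ! : ℤ) * numStoppingSets (H m) l ≤ ((2 : ℤ) ^ l - l) ^ m := by
    have hlow := le_factorial_mul_numStoppingSets_add (hinj m) (hnz m) l
    have hup := factorial_mul_numStoppingSets_le (hinj m) (hnz m) l
    zify [hl] at hlow hup
    exact ⟨by linarith, hup⟩
  refine ⟨fun m _ => hbounds m, fun hl3 => ?_⟩
  have hab : (2 : ℝ) ^ (l - 1) < 2 ^ l - l := by
    have := two_pow_sub_one_add_lt_two_pow hl3
    rw [lt_sub_iff_add_lt]
    exact_mod_cast this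
  refine tendsto_div_pow_of_sub_le_of_le (C := l + l.choose 2) (by positivity) hab
    (fun m => ?_) (fun m => by exact_mod_cast (hbounds m).2)
  rw [← pow_mul]
  exact_mod_cast (hbounds m).1

/-- Bounds on l!·S_l for the Hamming code parity-check matrices and the resulting
asymptotics l!·S_l / (2^l − l)^m → 1 for fixed l ≥ 3. -/
theorem stmt17 (l : ℕ) (hl : 2 ≤ l)
    (H : ∀ m : ℕ, Matrix (Fin m) (Fin (2 ^ m - 1)) (ZMod 2))
    (hinj : ∀ m, Function.Injective (fun j : Fin (2 ^ m - 1) => fun i => H m i j))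
    (hnz : ∀ m, ∀ j, (fun i => H m i j) ≠ (0 : Fin m → ZMod 2)) :
    (∀ m : ℕ, 1 ≤ m →
      ((2 : ℤ) ^ l - l) ^ m - (l + l.choose 2) * 2 ^ ((l - 1) * m) ≤
          (l.factorial : ℤ) * numStoppingSets (H m) l ∧
        (l.factorial : ℤ) * numStoppingSets (H m) l ≤ ((2 : ℤ) ^ l - l) ^ m) ∧
    (3 ≤ l →
      Filter.Tendsto
        (fun m : ℕ => (l.factorial * numStoppingSets (H m) l : ℝ) / ((2 : ℝ) ^ l - l) ^ m)
        Filter.atTop (nhds 1)) :=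
  stmt17_general l H hinj hnz
end

section
/- For fixed l ≥ 3 and all m, the number A_l of codewords of weight l in the Hamming code of length 2^m−1 satisfies 2^{(l−1)m} − (l + C(l,2))·2^{(l−2)m} ≤ l!·A_l ≤ 2^{(l−1)m}. Consequently, l!·A_l / 2^{(l−1)m} → 1 as m → ∞. -/
open Finset

/-- The number of codewords of weight `l` in the null space of `H`. -/
noncomputable def numCodewords {r n : ℕ} (H : Matrix (Fin r) (Fin n) (ZMod 2)) (l : ℕ) : ℕ :=
  Nat.card {c : Fin n → ZMod 2 //
    H.mulVec c = 0 ∧ (Finset.univ.filter fun j => c j = 1).card = l}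

/-!
The columns of a Hamming parity-check matrix are exactly the nonzero vectors of `𝔽₂^m`, so a
weight-`l` codeword is an `l`-set of nonzero vectors with zero sum, and `l! · A_l` counts the
`l`-tuples of distinct nonzero vectors with zero sum. There are `2^{(l-1)m}` zero-sum `l`-tuples,
since the last entry is forced. Those with a zero entry or two equal entries fall into
`l + C(l, 2)` families, and within each family a second entry is forced as well, so each family
has at most `2^{(l-2)m}` members.
-/

theorem card_le_pow_of_eqOn_imp_eq {ι V : Type*} [DecidableEq ι] [Fintype V] (K : Finset ι)
    (S : Finset (ι → V)) (hS : ∀ g₁ ∈ S, ∀ g₂ ∈ S, (∀ c ∈ K, g₁ c = g₂ c) → g₁ = g₂) :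
    #S ≤ Fintype.card V ^ #K := by
  calc #S ≤ #(univ : Finset (K → V)) :=
        card_le_card_of_injOn (fun g c => g c) (fun _ _ => mem_coe.mpr (mem_univ _))
          fun g₁ h₁ g₂ h₂ h => hS g₁ h₁ g₂ h₂ fun c hc => congrFun h ⟨c, hc⟩
    _ = Fintype.card V ^ #K := by simp

theorem eq_of_sum_eq_of_forall_ne {ι V : Type*} [Fintype ι] [AddCommGroup V] {g₁ g₂ : ι → V}
    (b : ι) (hsum : ∑ i, g₁ i = ∑ i, g₂ i) (hne : ∀ c, c ≠ b → g₁ c = g₂ c) : g₁ = g₂ := by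
  have hb : g₁ b - g₂ b = 0 := by
    rw [← Fintype.sum_eq_single b fun c hc => sub_eq_zero.mpr (hne c hc), Finset.sum_sub_distrib,
      hsum, sub_self]
  funext c
  obtain rfl | hc := eq_or_ne c b
  · exact sub_eq_zero.mp hb
  · exact hne c hc

theorem map_univ_eq_erase_of_card_le {α β : Type*} [Fintype α] [Fintype β] [DecidableEq β]
    (f : α ↪ β) {b : β} (hb : ∀ a, f a ≠ b) (hcard : Fintype.card β ≤ Fintype.card α + 1) :
    univ.map f = univ.erase b :=
  eq_of_subset_of_card_le
    (fun v hv => by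
      obtain ⟨a, -, rfl⟩ := mem_map.mp hv
      exact mem_erase.mpr ⟨hb a, mem_univ _⟩)
    (by rw [card_erase_of_mem (mem_univ _), card_map, card_univ, card_univ]; omega)

section Enumerations

variable {α : Type*} [Fintype α] [DecidableEq α]

noncomputable def injectiveImageEqEquiv {l : ℕ} (s : Finset α) :
    {g : Fin l → α // Function.Injective g ∧ univ.image g = s} ≃ (Fin l ≃ s) where
  toFun g := Equiv.ofBijective
    (fun i => ⟨g.1 i, by obtain ⟨g, -, rfl⟩ := g; exact mem_image_of_mem g (mem_univ i)⟩)
    ⟨fun i j h => g.2.1 (congrArg Subtype.val h), fun v => by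
      obtain ⟨g, -, rfl⟩ := g
      obtain ⟨i, -, hi⟩ := mem_image.mp v.2
      exact ⟨i, Subtype.ext hi⟩⟩
  invFun e := ⟨fun i => e i, Subtype.val_injective.comp e.injective, by
    ext v
    simp only [mem_image, mem_univ, true_and]
    exact ⟨fun ⟨i, hi⟩ => hi ▸ (e i).2, fun hv => ⟨e.symm ⟨v, hv⟩, by simp⟩⟩⟩
  left_inv g := rfl
  right_inv e := by ext; rfl

theorem card_filter_injective_image_eq_s18 {l : ℕ} {s : Finset α} (hs : #s = l) :
    #(univ.filter fun g : Fin l → α => Function.Injective g ∧ univ.image g = s) = l.factorial := by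
  rw [← Fintype.card_subtype, Fintype.card_congr (injectiveImageEqEquiv s),
    Fintype.card_equiv (s.equivFinOfCardEq hs).symm, Fintype.card_fin]

theorem card_filter_injective_eq_factorial_mul (l : ℕ) (P : Finset α → Prop) [DecidablePred P] :
    #(univ.filter fun g : Fin l → α => Function.Injective g ∧ P (univ.image g)) =
      l.factorial * #(univ.filter fun s : Finset α => #s = l ∧ P s) := by
  rw [card_eq_sum_card_fiberwise (f := fun g => univ.image g)
    (t := univ.filter fun s => #s = l ∧ P s)]
  · rw [mul_comm, ← smul_eq_mul, ← sum_const]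
    refine sum_congr rfl fun s hs => ?_
    rw [← card_filter_injective_image_eq_s18 (mem_filter.mp hs).2.1, filter_filter]
    congr 1
    refine filter_congr fun g _ =>
      ⟨fun h => ⟨h.1.1, h.2⟩, fun h => ⟨⟨h.1, h.2 ▸ (mem_filter.mp hs).2.2⟩, h.2⟩⟩
  · intro g hg
    obtain ⟨hinj, hP⟩ := (mem_filter.mp hg).2
    simp [card_image_of_injective _ hinj, hP]

end Enumerations

section ZeroSumTuples

variable {V : Type*} [AddCommGroup V] [Fintype V] [DecidableEq V]

variable (V) in
def zeroSumTuples (l : ℕ) : Finset (Fin l → V) :=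
  univ.filter fun g => ∑ i, g i = 0

def zeroSumTuplesSuccEquiv (k : ℕ) : {g : Fin (k + 1) → V // ∑ i, g i = 0} ≃ (Fin k → V) where
  toFun g := Fin.tail g.1
  invFun h := ⟨Fin.cons (-∑ i, h i) h, by simp [Fin.sum_univ_succ]⟩
  left_inv g := by
    obtain ⟨g, hg⟩ := g
    rw [Fin.sum_univ_succ] at hg
    ext i
    refine Fin.cases ?_ (fun j => ?_) i <;> simp [Fin.tail, eq_neg_of_add_eq_zero_left hg]
  right_inv h := by simp

theorem card_zeroSumTuples (l : ℕ) : #(zeroSumTuples V l) = Fintype.card V ^ (l - 1) := by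
  cases l with
  | zero => simp [zeroSumTuples]
  | succ k =>
    rw [zeroSumTuples, ← Fintype.card_subtype, Fintype.card_congr (zeroSumTuplesSuccEquiv k)]
    simp

variable (V) in
def distinctNonzeroZeroSumTuples (l : ℕ) : Finset (Fin l → V) :=
  (zeroSumTuples V l).filter fun g => Function.Injective g ∧ ∀ i, g i ≠ 0

theorem card_distinctNonzeroZeroSumTuples_le (l : ℕ) :
    #(distinctNonzeroZeroSumTuples V l) ≤ Fintype.card V ^ (l - 1) :=
  (card_le_card (filter_subset _ _)).trans_eq (card_zeroSumTuples l)

theorem card_le_of_subset_zeroSumTuples {l : ℕ} {S : Finset (Fin l → V)}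
    (hS : S ⊆ zeroSumTuples V l) {a b : Fin l} (hab : a ≠ b)
    (hdet : ∀ g₁ ∈ S, ∀ g₂ ∈ S, (∀ c, c ≠ a → c ≠ b → g₁ c = g₂ c) → g₁ a = g₂ a) :
    #S ≤ Fintype.card V ^ (l - 2) := by
  have hK := card_le_pow_of_eqOn_imp_eq ({a, b}ᶜ) S fun g₁ h₁ g₂ h₂ hK => by
    have hoff : ∀ c, c ≠ a → c ≠ b → g₁ c = g₂ c := fun c hca hcb => hK c (by simp [hca, hcb])
    have hsum : ∑ i, g₁ i = ∑ i, g₂ i := by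
      rw [(mem_filter.mp (hS h₁)).2, (mem_filter.mp (hS h₂)).2]
    refine eq_of_sum_eq_of_forall_ne b hsum fun c hcb => ?_
    obtain rfl | hca := eq_or_ne c a
    · exact hdet g₁ h₁ g₂ h₂ hoff
    · exact hoff c hca hcb
  rwa [card_compl, card_pair hab, Fintype.card_fin] at hK

theorem card_filter_apply_eq_zero_le {l : ℕ} (hl : 2 ≤ l) (i : Fin l) :
    #((zeroSumTuples V l).filter fun g => g i = 0) ≤ Fintype.card V ^ (l - 2) := by
  obtain ⟨b, hb⟩ := Fintype.exists_ne_of_one_lt_card (by simp; omega) i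
  refine card_le_of_subset_zeroSumTuples (filter_subset _ _) hb.symm fun g₁ h₁ g₂ h₂ _ => ?_
  rw [(mem_filter.mp h₁).2, (mem_filter.mp h₂).2]

theorem card_filter_apply_eq_apply_le {l : ℕ} (hl : 3 ≤ l) {a b : Fin l} (hab : a ≠ b) :
    #((zeroSumTuples V l).filter fun g => g a = g b) ≤ Fintype.card V ^ (l - 2) := by
  obtain ⟨k, -, hk⟩ := exists_mem_notMem_of_card_lt_card (s := {a, b}) (t := univ)
    (by rw [card_pair hab, card_univ, Fintype.card_fin]; omega)
  simp only [mem_insert, mem_singleton, not_or] at hk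
  refine card_le_of_subset_zeroSumTuples (filter_subset _ _) (Ne.symm hk.2)
    fun g₁ h₁ g₂ h₂ hoff => ?_
  rw [← (mem_filter.mp h₁).2, ← (mem_filter.mp h₂).2]
  exact hoff a hab (Ne.symm hk.1)

theorem card_zeroSumTuples_le_card_distinctNonzeroZeroSumTuples_add {l : ℕ} (hl : 3 ≤ l) :
    Fintype.card V ^ (l - 1) ≤
      #(distinctNonzeroZeroSumTuples V l) + (l + l.choose 2) * Fintype.card V ^ (l - 2) := by
  rw [← card_zeroSumTuples]
  set W := zeroSumTuples V l
  set withZeroEntry := univ.biUnion fun i => W.filter fun g => g i = 0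
  set withRepeat := (powersetCard 2 univ).biUnion fun s : Finset (Fin l) =>
    W.filter fun g => ∀ i ∈ s, ∀ j ∈ s, g i = g j
  have hcover : W ⊆ distinctNonzeroZeroSumTuples V l ∪ (withZeroEntry ∪ withRepeat) := by
    intro g hg
    by_cases hzero : ∃ i, g i = 0
    · obtain ⟨i, hi⟩ := hzero
      exact mem_union_right _ <| mem_union_left _ <|
        mem_biUnion.mpr ⟨i, mem_univ _, mem_filter.mpr ⟨hg, hi⟩⟩
    by_cases hinj : Function.Injective g
    · exact mem_union_left _ (mem_filter.mpr ⟨hg, hinj, fun i hi => hzero ⟨i, hi⟩⟩)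
    obtain ⟨a, b, hgab, hab⟩ := Function.not_injective_iff.mp hinj
    refine mem_union_right _ <| mem_union_right _ <|
      mem_biUnion.mpr ⟨{a, b}, ?_, mem_filter.mpr ⟨hg, ?_⟩⟩
    · simp [card_pair hab]
    · simp [hgab]
  have hwithZeroEntry : #withZeroEntry ≤ l * Fintype.card V ^ (l - 2) :=
    calc #withZeroEntry ≤ ∑ i, #(W.filter fun g => g i = 0) := card_biUnion_le
      _ ≤ ∑ _i : Fin l, Fintype.card V ^ (l - 2) :=
          sum_le_sum fun i _ => card_filter_apply_eq_zero_le (by omega) i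
      _ = l * Fintype.card V ^ (l - 2) := by simp
  have hwithRepeat : #withRepeat ≤ l.choose 2 * Fintype.card V ^ (l - 2) :=
    calc #withRepeat
        ≤ ∑ s ∈ powersetCard 2 univ, #(W.filter fun g => ∀ i ∈ s, ∀ j ∈ s, g i = g j) :=
          card_biUnion_le
      _ ≤ ∑ _s ∈ powersetCard 2 (univ : Finset (Fin l)), Fintype.card V ^ (l - 2) := by
          refine sum_le_sum fun s hs => ?_
          obtain ⟨a, b, hab, rfl⟩ := card_eq_two.mp (mem_powersetCard.mp hs).2
          refine (card_le_card fun g hg => ?_).trans (card_filter_apply_eq_apply_le hl hab)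
          simp only [mem_filter, mem_insert, mem_singleton, forall_eq_or_imp, forall_eq] at hg ⊢
          exact ⟨hg.1, hg.2.1.2⟩
      _ = l.choose 2 * Fintype.card V ^ (l - 2) := by simp
  calc #W ≤ #(distinctNonzeroZeroSumTuples V l) + (#withZeroEntry + #withRepeat) :=
        (card_le_card hcover).trans ((card_union_le _ _).trans (by gcongr; exact card_union_le _ _))
    _ ≤ _ := by rw [add_mul]; gcongr

end ZeroSumTuples

theorem card_filter_sum_eq_zero_map {ι V : Type*} [Fintype ι] [AddCommMonoid V] [Fintype V]
    [DecidableEq V] (col : ι ↪ V) (hcol : univ.map col = univ.erase 0) (l : ℕ) :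
    #(univ.filter fun s : Finset ι => #s = l ∧ ∑ j ∈ s, col j = 0) =
      #(univ.filter fun t : Finset V => #t = l ∧ 0 ∉ t ∧ ∑ v ∈ t, v = 0) := by
  refine card_nbij (fun s => s.map col) (fun s hs => ?_) (fun s _ u _ h => map_injective col h)
    fun t ht => ?_
  · obtain ⟨hcard, hsum⟩ := (mem_filter.mp hs).2
    have h0 : 0 ∉ s.map col := fun h => by
      simpa [hcol] using map_subset_map.mpr (subset_univ s) h
    simp [hcard, hsum, h0]
  · obtain ⟨hcard, h0, hsum⟩ := (mem_filter.mp ht).2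
    have hsub : t ⊆ univ.map col :=
      hcol ▸ fun v hv => mem_erase.mpr ⟨ne_of_mem_of_not_mem hv h0, mem_univ v⟩
    obtain ⟨u, -, rfl⟩ := subset_map_iff.mp hsub
    rw [card_map] at hcard
    rw [sum_map] at hsum
    exact ⟨u, mem_filter.mpr ⟨mem_univ u, hcard, hsum⟩, rfl⟩

theorem factorial_mul_card_filter_sum_eq_zero {ι V : Type*} [Fintype ι] [AddCommGroup V] [Fintype V]
    [DecidableEq V] (col : ι ↪ V) (hcol : univ.map col = univ.erase 0) (l : ℕ) :
    l.factorial * #(univ.filter fun s : Finset ι => #s = l ∧ ∑ j ∈ s, col j = 0) =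
      #(distinctNonzeroZeroSumTuples V l) := by
  rw [card_filter_sum_eq_zero_map col hcol, ← card_filter_injective_eq_factorial_mul,
    distinctNonzeroZeroSumTuples, zeroSumTuples, filter_filter]
  refine congrArg card (filter_congr fun g _ => ?_)
  constructor
  · rintro ⟨hinj, h0, hsum⟩
    refine ⟨by rwa [sum_image fun i _ j _ h => hinj h] at hsum, hinj, fun i hi => ?_⟩
    exact h0 (hi ▸ mem_image_of_mem g (mem_univ i))
  · rintro ⟨hsum, hinj, h0⟩
    refine ⟨hinj, fun hmem => ?_, by rwa [sum_image fun i _ j _ h => hinj h]⟩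
    obtain ⟨i, -, hi⟩ := mem_image.mp hmem
    exact h0 i hi

def finsetEquivZModTwo (ι : Type*) [Fintype ι] [DecidableEq ι] : Finset ι ≃ (ι → ZMod 2) where
  toFun s j := if j ∈ s then 1 else 0
  invFun c := univ.filter fun j => c j = 1
  left_inv s := by ext; simp
  right_inv c := by
    funext j
    have : ∀ x : ZMod 2, x = 0 ∨ x = 1 := by decide
    rcases this (c j) with h | h <;> simp [h]

theorem numCodewords_eq_card_filter {r n : ℕ} (H : Matrix (Fin r) (Fin n) (ZMod 2)) (l : ℕ) :
    numCodewords H l =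
      #(univ.filter fun s : Finset (Fin n) => #s = l ∧ ∑ j ∈ s, (fun i => H i j) = 0) := by
  rw [numCodewords, ← Fintype.card_subtype, ← Nat.card_eq_fintype_card]
  refine Nat.card_congr (((finsetEquivZModTwo (Fin n)).subtypeEquiv fun s => ?_).symm)
  have hsupp : (univ.filter fun j => finsetEquivZModTwo (Fin n) s j = 1) = s :=
    (finsetEquivZModTwo (Fin n)).symm_apply_apply s
  have hmul : H.mulVec (finsetEquivZModTwo (Fin n) s) = ∑ j ∈ s, fun i => H i j := by
    ext i
    simp [finsetEquivZModTwo, Matrix.mulVec, dotProduct, Finset.sum_apply]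
  rw [hsupp, hmul, and_comm]

theorem card_fun_fin_zmod_two (m : ℕ) : Fintype.card (Fin m → ZMod 2) = 2 ^ m := by
  simp

theorem factorial_mul_numCodewords_hamming {m : ℕ} (H : Matrix (Fin m) (Fin (2 ^ m - 1)) (ZMod 2))
    (hinj : Function.Injective fun j i => H i j) (hnz : ∀ j, (fun i => H i j) ≠ 0) (l : ℕ) :
    l.factorial * numCodewords H l =
      #(distinctNonzeroZeroSumTuples (Fin m → ZMod 2) l) := by
  have hcol := map_univ_eq_erase_of_card_le ⟨_, hinj⟩ hnz
    (by simp [Nat.sub_add_cancel Nat.one_le_two_pow])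
  rw [numCodewords_eq_card_filter, ← factorial_mul_card_filter_sum_eq_zero _ hcol]
  rfl

theorem factorial_mul_numCodewords_hamming_le {m : ℕ}
    (H : Matrix (Fin m) (Fin (2 ^ m - 1)) (ZMod 2)) (hinj : Function.Injective fun j i => H i j)
    (hnz : ∀ j, (fun i => H i j) ≠ 0) (l : ℕ) :
    l.factorial * numCodewords H l ≤ 2 ^ ((l - 1) * m) := by
  rw [factorial_mul_numCodewords_hamming H hinj hnz, pow_mul', ← card_fun_fin_zmod_two]
  exact card_distinctNonzeroZeroSumTuples_le l

theorem le_factorial_mul_numCodewords_hamming_add {m l : ℕ} (hl : 3 ≤ l)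
    (H : Matrix (Fin m) (Fin (2 ^ m - 1)) (ZMod 2)) (hinj : Function.Injective fun j i => H i j)
    (hnz : ∀ j, (fun i => H i j) ≠ 0) :
    2 ^ ((l - 1) * m) ≤ l.factorial * numCodewords H l + (l + l.choose 2) * 2 ^ ((l - 2) * m) := by
  rw [factorial_mul_numCodewords_hamming H hinj hnz, pow_mul', pow_mul', ← card_fun_fin_zmod_two]
  exact card_zeroSumTuples_le_card_distinctNonzeroZeroSumTuples_add hl

theorem tendsto_div_two_pow_of_bounds {a : ℕ → ℕ} {p q C : ℕ} (hpq : p = q + 1)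
    (hlow : ∀ m, 2 ^ (p * m) ≤ a m + C * 2 ^ (q * m)) (hup : ∀ m, a m ≤ 2 ^ (p * m)) :
    Filter.Tendsto (fun m => (a m : ℝ) / (2 : ℝ) ^ (p * m)) Filter.atTop (nhds 1) := by
  have hup' (m : ℕ) : (a m : ℝ) ≤ 2 ^ (p * m) := by exact_mod_cast hup m
  have hlow' (m : ℕ) : (2 : ℝ) ^ (p * m) - C * 2 ^ (q * m) ≤ a m := by
    have := (Nat.cast_le (α := ℝ)).mpr (hlow m)
    push_cast at this
    linarith
  have hlim : Filter.Tendsto (fun m : ℕ => 1 - C * (1 / 2 : ℝ) ^ m) Filter.atTop (nhds 1) := by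
    simpa using ((tendsto_pow_atTop_nhds_zero_of_lt_one (r := (1 / 2 : ℝ)) (by norm_num)
      (by norm_num)).const_mul (C : ℝ)).const_sub 1
  refine tendsto_of_tendsto_of_tendsto_of_le_of_le hlim tendsto_const_nhds (fun m => ?_)
    fun m => div_le_one_of_le₀ (hup' m) (by positivity)
  have hpos : (0 : ℝ) < 2 ^ (p * m) := by positivity
  calc 1 - C * (1 / 2 : ℝ) ^ m = ((2 : ℝ) ^ (p * m) - C * 2 ^ (q * m)) / 2 ^ (p * m) := by
        have hhalf : (1 / 2 : ℝ) ^ m * 2 ^ m = 1 := by rw [← mul_pow]; norm_num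
        rw [eq_div_iff hpos.ne', hpq, add_mul, one_mul, pow_add]
        linear_combination (-C * 2 ^ (q * m) : ℝ) * hhalf
    _ ≤ a m / 2 ^ (p * m) := div_le_div_of_nonneg_right (hlow' m) hpos.le

/-- Bounds on l!·A_l for the Hamming code of length 2^m − 1 and the resulting
asymptotics l!·A_l / 2^{(l−1)m} → 1 for fixed l ≥ 3. -/
theorem stmt18 (l : ℕ) (hl : 3 ≤ l)
    (H : ∀ m : ℕ, Matrix (Fin m) (Fin (2 ^ m - 1)) (ZMod 2))
    (hinj : ∀ m, Function.Injective (fun j : Fin (2 ^ m - 1) => fun i => H m i j))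
    (hnz : ∀ m, ∀ j, (fun i => H m i j) ≠ (0 : Fin m → ZMod 2)) :
    (∀ m : ℕ,
      (2 : ℤ) ^ ((l - 1) * m) - (l + l.choose 2) * 2 ^ ((l - 2) * m) ≤
          (l.factorial : ℤ) * numCodewords (H m) l ∧
        (l.factorial : ℤ) * numCodewords (H m) l ≤ 2 ^ ((l - 1) * m)) ∧
    Filter.Tendsto
      (fun m : ℕ => (l.factorial * numCodewords (H m) l : ℝ) / 2 ^ ((l - 1) * m))
      Filter.atTop (nhds 1) := by
  have hup m := factorial_mul_numCodewords_hamming_le (H m) (hinj m) (hnz m) l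
  have hlow m := le_factorial_mul_numCodewords_hamming_add hl (H m) (hinj m) (hnz m)
  refine ⟨fun m => ⟨?_, by exact_mod_cast hup m⟩, ?_⟩
  · have := hlow m
    zify at this
    linarith
  · simpa only [Nat.cast_mul] using
      tendsto_div_two_pow_of_bounds (by omega : l - 1 = l - 2 + 1) hlow hup
end
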